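/- arXiv:1810.09748 — 7 statements merged into one kernel-verified Lean document; each statement's English description precedes it below -/
import Mathlib

section
/- Let μ be a compactly supported complex Borel measure on ℂ with μ(ℂ) ≠ 0. If for all nonnegative integers m, n one has μ(ℂ) · ∫ zⁿ · conj(z)ᵐ dμ(z) = (∫ zⁿ dμ(z)) · (∫ conj(z)ᵐ dμ(z)), then μ = c·δ_ζ for some nonzero constant c ∈ ℂ and some point ζ ∈ ℂ, where δ_ζ is the Dirac measure at ζ. -/
/-!
Write `ν = h • P` and `c = ν(ℂ)`. Expanding the exponentials, the covariance identity says
`c ∫ exp (a z + b z̄) dν = (∫ exp (a z) dν) (∫ exp (b z̄) dν)`. Put `F(a) = ∫ exp (a z) dν` and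
`G(w) = ∫ exp (w z) h̄ dP`, both entire. As `|exp ((a + s) z + (b - s̄) z̄)| = |exp (a z + b z̄)|`,
the function `s ↦ F(a + s) G(w - s)` is bounded, hence constant by Liouville. This forces
`c F(x + y) = F(x) F(y)`, so `F(a) = c exp (a ζ)` for some `ζ`, and then
`∫ exp (a z + b z̄) dν = c exp (a ζ + b ζ̄)` for all `a, b`. By Stone–Weierstrass these exponentials
span a dense subspace of `C(K, ℂ)` for compact `K`, so `ν` and `c δ_ζ` agree on continuous
functions, hence on closed sets, hence on all Borel sets.
-/

open MeasureTheory Complex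
open scoped Classical

open Filter Topology Set ComplexConjugate
open Function (uncurry)
open Submodule (span)

theorem hasSum_integral_cexp_mul {X : Type*} [MeasurableSpace X] {μ : Measure X} {w g : X → ℂ}
    {R : ℝ} (hw : AEStronglyMeasurable w μ) (hwR : ∀ᵐ x ∂μ, ‖w x‖ ≤ R) (hg : Integrable g μ)
    (a : ℂ) :
    HasSum (fun n : ℕ => a ^ n / n.factorial * ∫ x, w x ^ n * g x ∂μ)
      (∫ x, cexp (a * w x) * g x ∂μ) := by
  set F : ℕ → X → ℂ := fun n x => (a * w x) ^ n / n.factorial * g x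
  have hF_le : ∀ n, ∀ᵐ x ∂μ, ‖F n x‖ ≤ (‖a‖ * R) ^ n / n.factorial * ‖g x‖ := fun n => by
    filter_upwards [hwR] with x hx
    simp only [F, norm_mul, norm_div, norm_pow, norm_natCast]
    gcongr
  have hF_int : ∀ n, Integrable (F n) μ := fun n =>
    (hg.norm.const_mul _).mono' (by fun_prop) (hF_le n)
  have hF_sum : Summable fun n => ∫ x, ‖F n x‖ ∂μ := by
    refine .of_nonneg_of_le (fun n => integral_nonneg fun x => norm_nonneg _) (fun n => ?_)
      ((Real.summable_pow_div_factorial (‖a‖ * R)).mul_right (∫ x, ‖g x‖ ∂μ))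
    rw [← integral_const_mul]
    exact integral_mono_ae (hF_int n).norm (hg.norm.const_mul _) (hF_le n)
  have hF_tsum : ∀ x, ∑' n, F n x = cexp (a * w x) * g x := fun x => by
    rw [tsum_mul_right, exp_eq_exp_ℂ, ← (NormedSpace.expSeries_div_hasSum_exp _).tsum_eq]
  have hF_integral : ∀ n, ∫ x, F n x ∂μ = a ^ n / n.factorial * ∫ x, w x ^ n * g x ∂μ := fun n => by
    rw [← integral_const_mul]
    congr 1 with x
    simp only [F, mul_pow]
    ring
  simpa only [hF_tsum, hF_integral] using hasSum_integral_of_summable_integral_norm hF_int hF_sum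

theorem exists_eq_mul_cexp_of_mul_add {f : ℂ → ℂ} {c : ℂ} (hf : Differentiable ℂ f)
    (hc : c ≠ 0) (h0 : f 0 = c) (hmul : ∀ x y, c * f (x + y) = f x * f y) :
    ∃ ζ, ∀ x, f x = c * cexp (x * ζ) := by
  set ζ := deriv f 0 / c
  have hf' : ∀ x, deriv f x = ζ * f x := fun x => by
    have h := congrArg (fun F : ℂ → ℂ => deriv F 0) (funext (hmul x))
    simp only [deriv_const_mul_field', deriv_comp_const_add, add_zero] at h
    rw [div_mul_eq_mul_div, eq_div_iff hc]
    linear_combination h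
  have hu : ∀ x, deriv (fun x => f x * cexp (x * -ζ)) x = 0 := fun x => by
    have h : HasDerivAt (fun x => f x * cexp (x * -ζ)) _ x :=
      (hf x).hasDerivAt.mul (hasDerivAt_mul_const (-ζ)).cexp
    rw [h.deriv, hf' x]
    ring
  refine ⟨ζ, fun x => ?_⟩
  have h := is_const_of_deriv_eq_zero (by fun_prop) hu x 0
  simp only [zero_mul, exp_zero, mul_one, h0] at h
  rw [← h, mul_assoc, ← exp_add]
  simp

theorem MeasureTheory.Integrable.conj {X : Type*} [MeasurableSpace X] {μ : Measure X}
    {g : X → ℂ} (hg : Integrable g μ) : Integrable (fun x => conj (g x)) μ :=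
  hg.norm.mono' (by fun_prop) (.of_forall fun x => (RCLike.norm_conj _).le)

theorem tendsto_integral_apprSeq_smul {X E : Type*} [TopologicalSpace X]
    [HasOuterApproxClosed X] [MeasurableSpace X] [OpensMeasurableSpace X] [NormedAddCommGroup E]
    [NormedSpace ℝ E] {F : Set X} (hF : IsClosed F) {μ : Measure X} {f : X → E}
    (hf : Integrable f μ) :
    Tendsto (fun n => ∫ x, (hF.apprSeq n x : ℝ) • f x ∂μ) atTop (𝓝 (∫ x in F, f x ∂μ)) := by
  rw [← integral_indicator hF.measurableSet]
  refine tendsto_integral_of_dominated_convergence (‖f ·‖)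
    (fun n => (Continuous.aestronglyMeasurable (by fun_prop)).smul hf.1) hf.norm
    (fun n => .of_forall fun x => ?_) (.of_forall fun x => ?_)
  · rw [norm_smul, NNReal.norm_eq]
    exact mul_le_of_le_one_left (norm_nonneg _) (HasOuterApproxClosed.apprSeq_apply_le_one hF n x)
  · have h_ind := (NNReal.continuous_coe.tendsto _).comp
      (tendsto_pi_nhds.1 (HasOuterApproxClosed.tendsto_apprSeq hF) x)
    refine (h_ind.smul_const (f x)).congr' (.of_forall fun n => rfl) |>.trans ?_
    by_cases hx : x ∈ F <;> simp [hx]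

open scoped NNReal BoundedContinuousFunction in
theorem setIntegral_eq_of_forall_integral_smul_eq {X E : Type*} [TopologicalSpace X]
    [HasOuterApproxClosed X] [MeasurableSpace X] [BorelSpace X] [NormedAddCommGroup E]
    [NormedSpace ℝ E] {μ ν : Measure X} {f g : X → E} (hf : Integrable f μ)
    (hg : Integrable g ν) (h : ∀ φ : X →ᵇ ℝ≥0, ∫ x, (φ x : ℝ) • f x ∂μ = ∫ x, (φ x : ℝ) • g x ∂ν)
    {s : Set X} (hs : MeasurableSet s) :
    ∫ x in s, f x ∂μ = ∫ x in s, g x ∂ν := by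
  have h_closed : ∀ F, IsClosed F → ∫ x in F, f x ∂μ = ∫ x in F, g x ∂ν := fun F hF =>
    tendsto_nhds_unique_of_eventuallyEq (tendsto_integral_apprSeq_smul hF hf)
      (tendsto_integral_apprSeq_smul hF hg) (.of_forall fun n => h (hF.apprSeq n))
  have h_univ : ∫ x, f x ∂μ = ∫ x, g x ∂ν := by
    simpa using h_closed univ isClosed_univ
  induction s, hs using MeasurableSpace.induction_on_inter
    (BorelSpace.measurable_eq.trans (borel_eq_generateFrom_isClosed (α := X)))
    isPiSystem_isClosed with
  | empty => simp
  | basic F hF => exact h_closed F hF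
  | compl t ht ih => rw [setIntegral_compl ht hf, setIntegral_compl ht hg, ih, h_univ]
  | iUnion t ht_disj ht ih =>
    rw [integral_iUnion ht ht_disj hf.integrableOn, integral_iUnion ht ht_disj hg.integrableOn]
    exact tsum_congr ih

section IntegralMulCLM

variable {X : Type*} [TopologicalSpace X] [CompactSpace X] [MeasurableSpace X]
  [OpensMeasurableSpace X] {μ : Measure X} {f : X → ℂ}

theorem integrable_continuousMap_mul (hf : Integrable f μ) (φ : C(X, ℂ)) :
    Integrable (fun x => φ x * f x) μ :=
  hf.bdd_mul φ.continuous.aestronglyMeasurable (.of_forall φ.norm_coe_le_norm)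

noncomputable def integralMulCLM (hf : Integrable f μ) : C(X, ℂ) →L[ℂ] ℂ :=
  LinearMap.mkContinuous
    { toFun := fun φ => ∫ x, φ x * f x ∂μ
      map_add' := fun φ ψ => by
        simp only [ContinuousMap.add_apply, add_mul]
        exact integral_add (integrable_continuousMap_mul hf φ)
          (integrable_continuousMap_mul hf ψ)
      map_smul' := fun r φ => by
        simp only [ContinuousMap.smul_apply, smul_eq_mul, mul_assoc, integral_const_mul,
          RingHom.id_apply] }
    (∫ x, ‖f x‖ ∂μ) fun φ => by
      dsimp only [LinearMap.coe_mk, AddHom.coe_mk]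
      rw [mul_comm, ← integral_const_mul]
      refine (norm_integral_le_integral_norm _).trans
        (integral_mono (integrable_continuousMap_mul hf φ).norm (hf.norm.const_mul _) fun x => ?_)
      rw [norm_mul]
      gcongr
      exact φ.norm_coe_le_norm x

@[simp]
theorem integralMulCLM_apply (hf : Integrable f μ) (φ : C(X, ℂ)) :
    integralMulCLM hf φ = ∫ x, φ x * f x ∂μ := rfl

end IntegralMulCLM

section StoneWeierstrass

variable (K : Set ℂ)

noncomputable def expMonomial (a b : ℂ) : C(K, ℂ) :=
  ⟨fun z => cexp (a * z + b * conj (z : ℂ)), by fun_prop⟩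

@[simp]
theorem expMonomial_apply (a b : ℂ) (z : K) :
    expMonomial K a b z = cexp (a * z + b * conj (z : ℂ)) := rfl

theorem expMonomial_mul (a b a' b' : ℂ) :
    expMonomial K a b * expMonomial K a' b' = expMonomial K (a + a') (b + b') := by
  ext z
  simp only [ContinuousMap.mul_apply, expMonomial_apply, ← exp_add]
  ring_nf

theorem star_expMonomial (a b : ℂ) :
    star (expMonomial K a b) = expMonomial K (conj b) (conj a) := by
  ext z
  simp only [ContinuousMap.star_apply, expMonomial_apply, star_def, ← exp_conj, map_add,
    map_mul, conj_conj, add_comm]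

noncomputable def expSubalgebra : StarSubalgebra ℂ C(K, ℂ) where
  toSubalgebra := Algebra.adjoin ℂ (range (uncurry (expMonomial K)))
  star_mem' := by
    change Algebra.adjoin ℂ _ ≤ star (Algebra.adjoin ℂ _)
    refine Algebra.adjoin_le ?_
    rintro - ⟨⟨a, b⟩, rfl⟩
    exact Algebra.subset_adjoin ⟨⟨conj b, conj a⟩, by simp [star_expMonomial]⟩

theorem expSubalgebra_toSubmodule :
    Subalgebra.toSubmodule (expSubalgebra K).toSubalgebra
      = span ℂ (range (uncurry (expMonomial K))) := by
  refine Algebra.adjoin_eq_span_of_subset _ (Subset.trans ?_ Submodule.subset_span)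
  intro x hx
  refine Submonoid.closure_induction (fun _ => id) ⟨⟨0, 0⟩, ?_⟩ ?_ hx
  · ext z
    simp
  · rintro - - - - ⟨⟨a, b⟩, rfl⟩ ⟨⟨a', b'⟩, rfl⟩
    exact ⟨⟨a + a', b + b'⟩, (expMonomial_mul K a b a' b').symm⟩

theorem expSubalgebra_separatesPoints : (expSubalgebra K).SeparatesPoints := by
  intro x y hxy
  have hne : (x : ℂ) - y ≠ 0 := sub_ne_zero.2 (Subtype.coe_injective.ne hxy)
  refine ⟨_, ⟨expMonomial K ((x : ℂ) - y)⁻¹ 0, Algebra.subset_adjoin ⟨⟨_, 0⟩, rfl⟩, rfl⟩, ?_⟩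
  have h : ((x : ℂ) - y)⁻¹ * x = ((x : ℂ) - y)⁻¹ * y + 1 := by field_simp; ring
  simp only [expMonomial_apply, zero_mul, add_zero, h]
  intro h_eq
  have h_norm := congrArg norm h_eq
  rw [norm_exp, norm_exp, add_re, one_re] at h_norm
  exact (Real.exp_lt_exp.2 (lt_add_one _)).ne' h_norm

theorem dense_span_expMonomial [CompactSpace K] :
    Dense (span ℂ (range (uncurry (expMonomial K))) : Set C(K, ℂ)) := by
  rw [← expSubalgebra_toSubmodule, dense_iff_closure_eq]
  have h := ContinuousMap.starSubalgebra_topologicalClosure_eq_top_of_separatesPoints _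
    (expSubalgebra_separatesPoints K)
  have h_coe := StarSubalgebra.topologicalClosure_coe (expSubalgebra K)
  rw [h, StarSubalgebra.coe_top] at h_coe
  exact h_coe.symm

end StoneWeierstrass

theorem norm_cexp_mul_add_mul_conj_le {a b z : ℂ} {R : ℝ} (hz : ‖z‖ ≤ R) :
    ‖cexp (a * z + b * conj z)‖ ≤ Real.exp ((‖a‖ + ‖b‖) * R) := by
  refine (norm_exp_le_exp_norm _).trans (Real.exp_le_exp.2 ?_)
  calc ‖a * z + b * conj z‖ ≤ ‖a‖ * ‖z‖ + ‖b‖ * ‖z‖ := by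
        simpa only [norm_mul, RCLike.norm_conj] using norm_add_le (a * z) (b * conj z)
    _ ≤ (‖a‖ + ‖b‖) * R := by nlinarith [norm_nonneg a, norm_nonneg b]

theorem norm_cexp_add_sub_conj (a b s z : ℂ) :
    ‖cexp ((a + s) * z + (b - conj s) * conj z)‖ = ‖cexp (a * z + b * conj z)‖ := by
  have : (a + s) * z + (b - conj s) * conj z = a * z + b * conj z + (s * z - conj (s * z)) := by
    rw [map_mul]; ring
  rw [this, norm_exp, norm_exp, add_re, sub_re, conj_re, sub_self, add_zero]

noncomputable def expTransform (P : Measure ℂ) (g : ℂ → ℂ) (a b : ℂ) : ℂ :=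
  ∫ z, cexp (a * z + b * conj z) * g z ∂P

section ExpTransform

variable {P : Measure ℂ} {g : ℂ → ℂ} {R : ℝ}

theorem integrable_cexp_mul (hR : ∀ᵐ z ∂P, ‖z‖ ≤ R) (hg : Integrable g P) (a b : ℂ) :
    Integrable (fun z => cexp (a * z + b * conj z) * g z) P :=
  hg.bdd_mul (by fun_prop) (hR.mono fun _ hz => norm_cexp_mul_add_mul_conj_le hz)

theorem hasDerivAt_expTransform (hR : ∀ᵐ z ∂P, ‖z‖ ≤ R) (hg : Integrable g P) (a b : ℂ) :
    HasDerivAt (fun a => expTransform P g a b) (expTransform P (fun z => z * g z) a b) a := by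
  have hderiv := hasDerivAt_integral_of_dominated_loc_of_deriv_le (μ := P)
    (F := fun a z => cexp (a * z + b * conj z) * g z)
    (F' := fun a z => z * (cexp (a * z + b * conj z) * g z))
    (bound := fun z => R * (Real.exp ((‖a‖ + 1 + ‖b‖) * R) * ‖g z‖))
    (Metric.ball_mem_nhds a one_pos) (.of_forall fun a => by fun_prop)
    (integrable_cexp_mul hR hg a b) (by fun_prop) ?_ (hg.norm.const_mul _ |>.const_mul _) ?_
  · refine hderiv.2.congr_deriv (integral_congr_ae (.of_forall fun z => ?_))
    dsimp only
    ring
  · filter_upwards [hR] with z hz x hx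
    have hx' : ‖x‖ ≤ ‖a‖ + 1 := by
      have := mem_ball_iff_norm.1 hx
      linarith [norm_le_norm_add_norm_sub' x a]
    rw [norm_mul, norm_mul]
    gcongr
    · exact (norm_nonneg z).trans hz
    · exact (norm_cexp_mul_add_mul_conj_le hz).trans (Real.exp_le_exp.2 (by
        nlinarith [(norm_nonneg z).trans hz]))
  · filter_upwards with z x _
    have := ((((hasDerivAt_id x).mul_const z).add_const (b * conj z)).cexp).mul_const (g z)
    exact this.congr_deriv (by simp only [id_eq]; ring)

theorem conj_expTransform (a b : ℂ) :
    conj (expTransform P g a b) = expTransform P (fun z => conj (g z)) (conj b) (conj a) := by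
  rw [expTransform, expTransform, ← integral_conj]
  congr 1 with z
  rw [map_mul, ← exp_conj, map_add, map_mul, map_mul, conj_conj, add_comm]

@[simp]
theorem expTransform_zero_zero : expTransform P g 0 0 = ∫ z, g z ∂P := by
  simp [expTransform]

theorem norm_expTransform_add_sub_conj_le (hR : ∀ᵐ z ∂P, ‖z‖ ≤ R) (hg : Integrable g P)
    (a b s : ℂ) :
    ‖expTransform P g (a + s) (b - conj s)‖ ≤ Real.exp ((‖a‖ + ‖b‖) * R) * ∫ z, ‖g z‖ ∂P := by
  rw [← integral_const_mul]
  refine (norm_integral_le_integral_norm _).trans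
    (integral_mono_ae (integrable_cexp_mul hR hg _ _).norm (hg.norm.const_mul _) ?_)
  filter_upwards [hR] with z hz
  rw [norm_mul, norm_cexp_add_sub_conj]
  gcongr
  exact norm_cexp_mul_add_mul_conj_le hz

theorem hasSum_expTransform_left (hR : ∀ᵐ z ∂P, ‖z‖ ≤ R) (hg : Integrable g P) (a b : ℂ) :
    HasSum (fun n : ℕ => a ^ n / n.factorial * ∫ z, z ^ n * (cexp (b * conj z) * g z) ∂P)
      (expTransform P g a b) := by
  have hg_b : Integrable (fun z => cexp (b * conj z) * g z) P := by
    simpa using integrable_cexp_mul hR hg 0 b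
  have h := hasSum_integral_cexp_mul aestronglyMeasurable_id hR hg_b a
  simp only [id, ← mul_assoc, ← exp_add] at h
  simpa only [mul_assoc, expTransform] using h

theorem hasSum_expTransform_right (hR : ∀ᵐ z ∂P, ‖z‖ ≤ R) (hg : Integrable g P) (b : ℂ) :
    HasSum (fun m : ℕ => b ^ m / m.factorial * ∫ z, conj z ^ m * g z ∂P)
      (expTransform P g 0 b) := by
  have hR_conj : ∀ᵐ z ∂P, ‖conj z‖ ≤ R := hR.mono fun z hz => by rwa [RCLike.norm_conj]
  simpa [expTransform] using hasSum_integral_cexp_mul (by fun_prop) hR_conj hg b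

theorem mul_expTransform_eq_of_covariance (hR : ∀ᵐ z ∂P, ‖z‖ ≤ R) (hg : Integrable g P)
    (hcov : ∀ m n : ℕ, (∫ z, g z ∂P) * ∫ z, z ^ n * conj z ^ m * g z ∂P
      = (∫ z, z ^ n * g z ∂P) * ∫ z, conj z ^ m * g z ∂P) (a b : ℂ) :
    (∫ z, g z ∂P) * expTransform P g a b = expTransform P g a 0 * expTransform P g 0 b := by
  have hmoment : ∀ n : ℕ, (∫ z, g z ∂P) * ∫ z, z ^ n * (cexp (b * conj z) * g z) ∂P
      = (∫ z, z ^ n * g z ∂P) * expTransform P g 0 b := fun n => by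
    have hg_n : Integrable (fun z => z ^ n * g z) P :=
      hg.bdd_mul (c := R ^ n) (by fun_prop) (hR.mono fun z hz => by rw [norm_pow]; gcongr)
    have h_eq : ∫ z, z ^ n * (cexp (b * conj z) * g z) ∂P
        = expTransform P (fun z => z ^ n * g z) 0 b := by
      simp only [expTransform, zero_mul, zero_add]
      congr 1 with z
      ring
    rw [h_eq]
    refine ((hasSum_expTransform_right hR hg_n b).mul_left _).unique
      (((hasSum_expTransform_right hR hg b).mul_left _).congr_fun fun m => ?_)
    have h_comm : ∫ z, conj z ^ m * (z ^ n * g z) ∂P = ∫ z, z ^ n * conj z ^ m * g z ∂P := by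
      congr 1 with z
      ring
    rw [h_comm, mul_left_comm, hcov m n]
    ring
  refine ((hasSum_expTransform_left hR hg a b).mul_left _).unique
    (((hasSum_expTransform_left hR hg a 0).mul_right (expTransform P g 0 b)).congr_fun
      fun n => ?_)
  simp only [zero_mul, exp_zero, one_mul]
  rw [mul_left_comm, hmoment n]
  ring

theorem expTransform_add_mul_conj_sub (hR : ∀ᵐ z ∂P, ‖z‖ ≤ R) (hg : Integrable g P)
    (hfac : ∀ a b, (∫ z, g z ∂P) * expTransform P g a b
      = expTransform P g a 0 * expTransform P g 0 b) (a w s : ℂ) :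
    expTransform P g (a + s) 0 * expTransform P (fun z => conj (g z)) (w - s) 0
      = expTransform P g a 0 * expTransform P (fun z => conj (g z)) w 0 := by
  set f : ℂ → ℂ := fun s =>
    expTransform P g (a + s) 0 * expTransform P (fun z => conj (g z)) (w - s) 0
  have hf : Differentiable ℂ f := fun s =>
    (((hasDerivAt_expTransform hR hg _ 0).comp s ((hasDerivAt_id s).const_add a)).mul
      ((hasDerivAt_expTransform hR hg.conj _ 0).comp s
        ((hasDerivAt_id s).const_sub w))).differentiableAt
  have hf_le : ∀ s, ‖f s‖
      ≤ ‖∫ z, g z ∂P‖ * (Real.exp ((‖a‖ + ‖conj w‖) * R) * ∫ z, ‖g z‖ ∂P) := fun s => by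
    have h_conj : ‖expTransform P (fun z => conj (g z)) (w - s) 0‖
        = ‖expTransform P g 0 (conj w - conj s)‖ := by
      rw [← RCLike.norm_conj, conj_expTransform]
      simp only [conj_conj, map_zero, map_sub]
    rw [norm_mul, h_conj, ← norm_mul, ← hfac, norm_mul]
    gcongr
    exact norm_expTransform_add_sub_conj_le hR hg a (conj w) s
  have h_bdd : Bornology.IsBounded (range f) :=
    isBounded_iff_forall_norm_le.2 ⟨_, forall_mem_range.2 hf_le⟩
  simpa [f] using hf.apply_eq_apply_of_bounded h_bdd s 0

end ExpTransform

theorem integral_mul_eq_of_expTransform_eq {μ ν : Measure ℂ} {K : Set ℂ} (hK : IsCompact K)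
    (hμ : μ Kᶜ = 0) (hν : ν Kᶜ = 0) {f g : ℂ → ℂ} (hf : Integrable f μ) (hg : Integrable g ν)
    (h : expTransform μ f = expTransform ν g) (φ : C(ℂ, ℂ)) :
    ∫ z, φ z * f z ∂μ = ∫ z, φ z * g z ∂ν := by
  have : CompactSpace K := isCompact_iff_compactSpace.1 hK
  have h_comap : ∀ {ρ : Measure ℂ}, ρ Kᶜ = 0 → ∀ F : ℂ → ℂ,
      ∫ z : K, F z ∂(ρ.comap (↑)) = ∫ z, F z ∂ρ := fun hρ F => by
    rw [integral_subtype_comap hK.measurableSet, Measure.restrict_eq_self_of_ae_mem hρ]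
  have h_int : ∀ {ρ : Measure ℂ} {F : ℂ → ℂ}, Integrable F ρ →
      Integrable (fun z : K => F z) (ρ.comap (↑)) := fun hF =>
    (integrableOn_iff_comap_subtypeVal hK.measurableSet).1 hF.integrableOn
  have h_eq : integralMulCLM (h_int hf) = integralMulCLM (h_int hg) := by
    refine ContinuousLinearMap.ext_on (dense_span_expMonomial K) ?_
    rintro - ⟨⟨a, b⟩, rfl⟩
    simp only [integralMulCLM_apply, Function.uncurry_apply_pair, expMonomial_apply]
    rw [h_comap hμ (fun z => cexp (a * z + b * conj z) * f z),
      h_comap hν (fun z => cexp (a * z + b * conj z) * g z)]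
    exact congrFun (congrFun h a) b
  have h_φ := congrArg (fun L => L (φ.restrict K)) h_eq
  simp only [integralMulCLM_apply, ContinuousMap.restrict_apply] at h_φ
  rwa [h_comap hμ (fun z => φ z * f z), h_comap hν (fun z => φ z * g z)] at h_φ

theorem exists_expTransform_eq_of_covariance {P : Measure ℂ} {g : ℂ → ℂ} {R : ℝ}
    (hR : ∀ᵐ z ∂P, ‖z‖ ≤ R) (hg : Integrable g P) (hc : ∫ z, g z ∂P ≠ 0)
    (hcov : ∀ m n : ℕ, (∫ z, g z ∂P) * ∫ z, z ^ n * conj z ^ m * g z ∂P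
      = (∫ z, z ^ n * g z ∂P) * ∫ z, conj z ^ m * g z ∂P) :
    ∃ ζ, ∀ a b, expTransform P g a b = cexp (a * ζ + b * conj ζ) * ∫ z, g z ∂P := by
  set c := ∫ z, g z ∂P
  set F : ℂ → ℂ := fun a => expTransform P g a 0
  set G : ℂ → ℂ := fun w => expTransform P (fun z => conj (g z)) w 0
  have hfac : ∀ a b, c * expTransform P g a b = F a * expTransform P g 0 b :=
    mul_expTransform_eq_of_covariance hR hg hcov
  have hshift : ∀ a w s, F (a + s) * G (w - s) = F a * G w :=
    expTransform_add_mul_conj_sub hR hg hfac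
  have hF0 : F 0 = c := expTransform_zero_zero
  have hG0 : G 0 = conj c := by simp [G, c, integral_conj]
  have hc' : conj c ≠ 0 := (map_ne_zero _).2 hc
  have hGF : ∀ w, c * G w = conj c * F w := fun w => by
    have h := hshift 0 w w
    rw [zero_add, sub_self, hF0, hG0] at h
    linear_combination -h
  have hmul : ∀ x y, c * F (x + y) = F x * F y := fun x y => by
    have h := hshift x y y
    rw [sub_self, hG0] at h
    apply mul_left_cancel₀ hc'
    linear_combination c * h + F x * hGF y
  obtain ⟨ζ, hζ⟩ : ∃ ζ, ∀ x, F x = c * cexp (x * ζ) := exists_eq_mul_cexp_of_mul_add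
    (fun a => (hasDerivAt_expTransform hR hg a 0).differentiableAt) hc hF0 hmul
  have hright : ∀ b, expTransform P g 0 b = c * cexp (b * conj ζ) := fun b => by
    have h : conj (G (conj b)) = expTransform P g 0 b := by
      simpa only [conj_conj, map_zero] using
        conj_expTransform (P := P) (g := fun z => conj (g z)) (conj b) 0
    have hG : G (conj b) = conj c * cexp (conj b * ζ) := by
      apply mul_left_cancel₀ hc
      rw [hGF, hζ]
      ring
    rw [← h, hG]
    simp [← exp_conj]
  refine ⟨ζ, fun a b => mul_left_cancel₀ hc ?_⟩
  rw [hfac, hζ, hright, exp_add]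
  ring

/-- A compactly supported complex Borel measure on ℂ (encoded via its polar
decomposition `h • P` with `P = |μ|` a finite positive measure and `‖h‖ ≡ 1`)
with nonzero total mass that satisfies the covariance equation is a nonzero
multiple of a Dirac measure. -/
theorem stmt_0 (P : Measure ℂ) [IsFiniteMeasure P] (h : ℂ → ℂ)
    (hmeas : Measurable h) (hnorm : ∀ z, ‖h z‖ = 1)
    (hsupp : ∃ K : Set ℂ, IsCompact K ∧ P Kᶜ = 0)
    (hmass : ∫ z, h z ∂P ≠ 0)
    (hcov : ∀ m n : ℕ,
      (∫ z, h z ∂P) * ∫ z, z ^ n * (starRingEnd ℂ) z ^ m * h z ∂P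
        = (∫ z, z ^ n * h z ∂P) * ∫ z, (starRingEnd ℂ) z ^ m * h z ∂P) :
    ∃ (c : ℂ) (ζ : ℂ), c ≠ 0 ∧
      ∀ s : Set ℂ, MeasurableSet s →
        ∫ z in s, h z ∂P = if ζ ∈ s then c else 0 := by
  obtain ⟨K, hK, hPK⟩ := hsupp
  obtain ⟨R, hKR⟩ := hK.isBounded.subset_closedBall 0
  have hK_ae : ∀ᵐ z ∂P, z ∈ K := mem_ae_iff.2 hPK
  have hR : ∀ᵐ z ∂P, ‖z‖ ≤ R := hK_ae.mono fun z hz => mem_closedBall_zero_iff.1 (hKR hz)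
  have h_int : Integrable h P :=
    (integrable_const (1 : ℝ)).mono' hmeas.aestronglyMeasurable (.of_forall fun z => (hnorm z).le)
  obtain ⟨ζ, hζ⟩ := exists_expTransform_eq_of_covariance hR h_int hmass hcov
  have h_dirac := integral_mul_eq_of_expTransform_eq (hK.insert ζ)
    (measure_mono_null (compl_subset_compl.2 (subset_insert ζ K)) hPK)
    (by simp) h_int (integrable_const (∫ z, h z ∂P) : Integrable _ (Measure.dirac ζ))
    (by ext a b; rw [hζ]; simp [expTransform])
  refine ⟨∫ z, h z ∂P, ζ, hmass, fun s hs => ?_⟩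
  rw [← setIntegral_dirac (fun _ => ∫ z, h z ∂P) ζ s]
  refine setIntegral_eq_of_forall_integral_smul_eq h_int (integrable_const _) (fun φ => ?_) hs
  simp only [real_smul]
  exact h_dirac ⟨fun z => (φ z : ℂ), by fun_prop⟩
end

section
/- Let X be a bounded complex random variable such that E[Xⁿ conj(X)ᵐ] = E[Xⁿ]·E[conj(X)ᵐ] for all nonnegative integers m, n. Then X is almost surely constant. -/
/-!
For `m = n = 1` the hypothesis reads `E[X X̄] = E[X]·E[X̄]`, which is exactly
`Var(Re X) + Var(Im X) = 0`. Both variances therefore vanish, so `Re X` and `Im X`, hence `X`,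
are almost surely equal to their means.
-/

open MeasureTheory ProbabilityTheory Complex ComplexConjugate

section

variable {Ω : Type*} [MeasurableSpace Ω] {μ : Measure Ω} {X : Ω → ℂ}

theorem integral_complex_re (hX : Integrable X μ) : ∫ ω, (X ω).re ∂μ = (∫ ω, X ω ∂μ).re :=
  integral_re hX

theorem integral_complex_im (hX : Integrable X μ) : ∫ ω, (X ω).im ∂μ = (∫ ω, X ω ∂μ).im :=
  integral_im hX

variable [IsProbabilityMeasure μ]

theorem variance_re_add_variance_im (hX : MemLp X 2 μ) :
    Var[fun ω ↦ (X ω).re; μ] + Var[fun ω ↦ (X ω).im; μ]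
      = (∫ ω, X ω * conj (X ω) ∂μ - (∫ ω, X ω ∂μ) * ∫ ω, conj (X ω) ∂μ).re := by
  have hre : MemLp (fun ω ↦ (X ω).re) 2 μ := hX.re
  have him : MemLp (fun ω ↦ (X ω).im) 2 μ := hX.im
  have hint : Integrable X μ := hX.integrable one_le_two
  have hmul_conj : ∫ ω, X ω * conj (X ω) ∂μ
      = ((∫ ω, (X ω).re ^ 2 ∂μ + ∫ ω, (X ω).im ^ 2 ∂μ : ℝ) : ℂ) := by
    simp_rw [Complex.mul_conj, normSq_apply, ← sq, integral_complex_ofReal]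
    rw [integral_add hre.integrable_sq him.integrable_sq]
  rw [variance_eq_sub hre, variance_eq_sub him, hmul_conj, integral_conj, sub_re, ofReal_re,
    Complex.mul_conj, ofReal_re, normSq_apply, integral_complex_re hint, integral_complex_im hint]
  simp only [Pi.pow_apply]
  ring

theorem ae_eq_integral_of_integral_mul_conj_eq (hX : MemLp X 2 μ)
    (h : ∫ ω, X ω * conj (X ω) ∂μ = (∫ ω, X ω ∂μ) * ∫ ω, conj (X ω) ∂μ) :
    ∀ᵐ ω ∂μ, X ω = ∫ ω, X ω ∂μ := by
  have hvar := variance_re_add_variance_im hX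
  rw [h, sub_self, zero_re] at hvar
  have hre_nonneg := variance_nonneg (fun ω ↦ (X ω).re) μ
  have him_nonneg := variance_nonneg (fun ω ↦ (X ω).im) μ
  have hre : ∀ᵐ ω ∂μ, (X ω).re = ∫ ω, (X ω).re ∂μ :=
    ae_eq_integral_of_variance_eq_zero hX.re (by linarith)
  have him : ∀ᵐ ω ∂μ, (X ω).im = ∫ ω, (X ω).im ∂μ :=
    ae_eq_integral_of_variance_eq_zero hX.im (by linarith)
  have hint : Integrable X μ := hX.integrable one_le_two
  filter_upwards [hre, him] with ω hω_re hω_im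
  exact Complex.ext (hω_re.trans (integral_complex_re hint))
    (hω_im.trans (integral_complex_im hint))

end

/-- A bounded complex random variable whose mixed moments factorize,
`E[Xⁿ conj(X)ᵐ] = E[Xⁿ]·E[conj(X)ᵐ]` for all `m, n`, is a.s. constant. -/
theorem stmt_4 {Ω : Type*} [MeasurableSpace Ω] (μ : Measure Ω)
    [IsProbabilityMeasure μ] (X : Ω → ℂ) (hX : Measurable X)
    (hXb : ∃ C : ℝ, ∀ᵐ ω ∂μ, ‖X ω‖ ≤ C)
    (hcov : ∀ m n : ℕ,
      ∫ ω, X ω ^ n * (starRingEnd ℂ) (X ω) ^ m ∂μ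
        = (∫ ω, X ω ^ n ∂μ) * ∫ ω, (starRingEnd ℂ) (X ω) ^ m ∂μ) :
    ∃ c : ℂ, ∀ᵐ ω ∂μ, X ω = c := by
  obtain ⟨C, hC⟩ := hXb
  have hL2 : MemLp X 2 μ := .of_bound hX.aestronglyMeasurable C hC
  exact ⟨_, ae_eq_integral_of_integral_mul_conj_eq hL2 (by simpa using hcov 1 1)⟩
end

section
/- Let μ be a finite complex Borel measure on [0, ∞) with μ([0,∞)) ≠ 0, whose Laplace transform L(s) = ∫ e^{−sx} dμ(x) satisfies μ([0,∞))·∫ e^{−(s+t)x} dμ(x) = L(s)·L(t) for all s, t ≥ 0. Then μ = c·δ_a for some nonzero c ∈ ℂ and some a ∈ [0, ∞). -/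
/-!
Put `c = ∫ h dP` and `β = L(1)/c`. The functional equation gives the moments
`∫ e^{-nx} h dP = c βⁿ`, hence `∫ p(e^{-x}) h dP = c p(β)` for every polynomial `p`. As `e^{-x}`
takes values in `[0,1]` on the support of `P`, `|p(β)|` is bounded by a multiple of
`sup_{[0,1]} |p|`; applied to the powers of `R - |X - β|²` (`R` large) this forces `β = b ∈ [0,1]`.
Weierstrass extends `∫ f(e^{-x}) h dP = c f(b)` to continuous `f`, and the `L¹` density of
bounded continuous functions to indicators: the image of `h • P` under `x ↦ e^{-x}` is `c δ_b`.
Since `c ≠ 0`, `b` lies in the range of `x ↦ e^{-x}`, i.e. `b = e^{-a}` with `a ≥ 0`.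
-/

open MeasureTheory Complex
open scoped Classical
open Polynomial Set ComplexConjugate
open scoped BoundedContinuousFunction

theorem eq_of_forall_norm_sub_le_mul {E : Type*} [NormedAddCommGroup E] {x y : E} {K : ℝ}
    (h : ∀ ε > 0, ‖x - y‖ ≤ ε * K) : x = y := by
  refine eq_of_forall_dist_le fun ε hε => ?_
  have hK : 0 < |K| + 1 := by positivity
  calc dist x y ≤ ε / (|K| + 1) * K := dist_eq_norm x y ▸ h _ (by positivity)
    _ ≤ ε / (|K| + 1) * (|K| + 1) := by gcongr; linarith [le_abs_self K]
    _ = ε := div_mul_cancel₀ ε hK.ne'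

theorem eq_mul_div_pow_of_mul_add {L : ℝ → ℂ} {c : ℂ} (hc : c ≠ 0) (hL0 : L 0 = c)
    (hL : ∀ s t : ℝ, 0 ≤ s → 0 ≤ t → c * L (s + t) = L s * L t) (n : ℕ) :
    L n = c * (L 1 / c) ^ n := by
  induction n with
  | zero => simpa using hL0
  | succ n ih =>
    apply mul_left_cancel₀ hc
    rw [Nat.cast_succ, hL n 1 n.cast_nonneg zero_le_one, ih, pow_succ,
      mul_left_comm c ((L 1 / c) ^ n), mul_div_cancel₀ _ hc]
    ring

theorem exists_eq_ofReal_mem_Icc_of_norm_eval_le {β : ℂ} {K : ℝ}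
    (H : ∀ (p : ℂ[X]) (M : ℝ), (∀ u ∈ Icc (0 : ℝ) 1, ‖p.eval (u : ℂ)‖ ≤ M) →
      ‖p.eval β‖ ≤ K * M) :
    ∃ b ∈ Icc (0 : ℝ) 1, β = b := by
  by_contra hβ
  have hδ : 0 < Metric.infDist β (ofReal '' Icc 0 1) :=
    ((isCompact_Icc.image continuous_ofReal).isClosed.notMem_iff_infDist_pos
      ((nonempty_Icc.2 zero_le_one).image _)).1 (by rintro ⟨b, hb, rfl⟩; exact hβ ⟨b, hb, rfl⟩)
  set δ := Metric.infDist β (ofReal '' Icc 0 1)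
  set R := (1 + ‖β‖) ^ 2
  -- on the real axis `q u = R - ‖u - β‖ ^ 2`, which stays below `R - δ ^ 2`, while `q β = R`
  set q : ℂ[X] := C (R : ℂ) - (X - C β) * (X - C (conj β))
  have hRδ : 0 < R - δ ^ 2 := by
    have : δ ≤ ‖β‖ := by
      simpa [dist_eq_norm] using Metric.infDist_le_dist_of_mem (x := β)
        (mem_image_of_mem ofReal (left_mem_Icc.2 zero_le_one))
    nlinarith [norm_nonneg β]
  have hq : ∀ u ∈ Icc (0 : ℝ) 1, ‖q.eval (u : ℂ)‖ ≤ R - δ ^ 2 := by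
    intro u hu
    have hdist : δ ≤ ‖(u : ℂ) - β‖ := by
      rw [norm_sub_rev, ← dist_eq_norm]; exact Metric.infDist_le_dist_of_mem ⟨u, hu, rfl⟩
    have hle : ‖(u : ℂ) - β‖ ≤ 1 + ‖β‖ :=
      (norm_sub_le _ _).trans (by simp [abs_of_nonneg hu.1, hu.2])
    have heval : q.eval (u : ℂ) = ((R - ‖(u : ℂ) - β‖ ^ 2 : ℝ) : ℂ) := by
      simp only [q, eval_sub, eval_mul, eval_C, eval_X]
      rw [show (u : ℂ) - conj β = conj ((u : ℂ) - β) by simp, mul_conj']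
      push_cast; ring
    rw [heval, norm_real, Real.norm_of_nonneg (by nlinarith [norm_nonneg ((u : ℂ) - β)])]
    nlinarith [norm_nonneg ((u : ℂ) - β)]
  obtain ⟨n, hn⟩ := pow_unbounded_of_one_lt K
    ((one_lt_div hRδ).2 (sub_lt_self R (by positivity)) : 1 < R / (R - δ ^ 2))
  have hqn := H (q ^ n) ((R - δ ^ 2) ^ n) fun u hu => by
    rw [eval_pow, norm_pow]; exact pow_le_pow_left₀ (norm_nonneg _) (hq u hu) n
  have hqβ : ‖q.eval β‖ = R := by simp [q, abs_of_nonneg (by positivity : 0 ≤ R)]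
  rw [eval_pow, norm_pow, hqβ] at hqn
  rw [div_pow, lt_div_iff₀ (pow_pos hRδ n)] at hn
  linarith

section Density

variable {Ω : Type*} [MeasurableSpace Ω] {μ : Measure Ω} {w : Ω → ℂ}

theorem integrable_mul_of_norm_le [IsFiniteMeasure μ] (hw_meas : AEStronglyMeasurable w μ)
    (hw : ∀ ω, ‖w ω‖ ≤ 1) {g : Ω → ℂ} {M : ℝ} (hg_meas : AEStronglyMeasurable g μ)
    (hg : ∀ᵐ ω ∂μ, ‖g ω‖ ≤ M) :
    Integrable (fun ω => g ω * w ω) μ :=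
  (Integrable.of_bound hw_meas 1 (ae_of_all _ hw)).bdd_mul hg_meas hg

theorem norm_integral_mul_le [IsFiniteMeasure μ] (hw : ∀ ω, ‖w ω‖ ≤ 1) {g : Ω → ℂ} {M : ℝ}
    (hg : ∀ᵐ ω ∂μ, ‖g ω‖ ≤ M) : ‖∫ ω, g ω * w ω ∂μ‖ ≤ M * μ.real univ := by
  refine norm_integral_le_of_norm_le_const ?_
  filter_upwards [hg] with ω hω
  rw [norm_mul]
  exact (mul_le_of_le_one_right (norm_nonneg _) (hw ω)).trans hω

theorem integral_eval_mul_eq_of_moments {T : Ω → ℂ} {c β : ℂ}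
    (hint : ∀ n : ℕ, Integrable (fun ω => T ω ^ n * w ω) μ)
    (hmom : ∀ n : ℕ, ∫ ω, T ω ^ n * w ω ∂μ = c * β ^ n) (p : ℂ[X]) :
    ∫ ω, p.eval (T ω) * w ω ∂μ = c * p.eval β := by
  have hsum : ∀ ω, p.eval (T ω) * w ω
      = ∑ i ∈ Finset.range (p.natDegree + 1), p.coeff i * (T ω ^ i * w ω) := by
    intro ω
    simp only [eval_eq_sum_range, Finset.sum_mul, mul_assoc]
  simp_rw [hsum]
  rw [integral_finsetSum _ fun i _ => (hint i).const_mul _, eval_eq_sum_range, Finset.mul_sum]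
  refine Finset.sum_congr rfl fun i _ => ?_
  rw [integral_const_mul, hmom]
  ring

theorem integral_comp_mul_eq_of_forall_polynomial [IsFiniteMeasure μ]
    (hw_meas : AEStronglyMeasurable w μ) (hw : ∀ ω, ‖w ω‖ ≤ 1) {T : Ω → ℝ} (hT : Measurable T)
    (hT01 : ∀ᵐ ω ∂μ, T ω ∈ Icc (0 : ℝ) 1) {c : ℂ} {b : ℝ} (hb : b ∈ Icc (0 : ℝ) 1)
    (H : ∀ p : ℝ[X], ∫ ω, ((p.eval (T ω) : ℝ) : ℂ) * w ω ∂μ = c * p.eval b) {f : ℝ → ℝ}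
    (hf : Continuous f) : ∫ ω, (f (T ω) : ℂ) * w ω ∂μ = c * f b := by
  have hint : ∀ g : ℝ → ℝ, Continuous g → Integrable (fun ω => (g (T ω) : ℂ) * w ω) μ := by
    intro g hg
    obtain ⟨M, hM⟩ := isCompact_Icc.exists_bound_of_continuousOn hg.continuousOn
    refine integrable_mul_of_norm_le hw_meas hw (M := M)
      ((continuous_ofReal.comp hg).measurable.comp hT).aestronglyMeasurable ?_
    filter_upwards [hT01] with ω hω
    simpa using hM _ hω
  refine eq_of_forall_norm_sub_le_mul (K := μ.real univ + ‖c‖) fun ε hε => ?_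
  obtain ⟨p, hp⟩ := exists_polynomial_near_of_continuousOn 0 1 f hf.continuousOn ε hε
  have hsplit : ∫ ω, (f (T ω) : ℂ) * w ω ∂μ - c * f b
      = ∫ ω, ((f (T ω) - p.eval (T ω) : ℝ) : ℂ) * w ω ∂μ + c * (p.eval b - f b : ℝ) := by
    push_cast
    simp_rw [sub_mul]
    rw [integral_sub (hint f hf) (hint _ p.continuous), H]
    ring
  have hfar : ‖∫ ω, ((f (T ω) - p.eval (T ω) : ℝ) : ℂ) * w ω ∂μ‖ ≤ ε * μ.real univ := by
    refine norm_integral_mul_le hw ?_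
    filter_upwards [hT01] with ω hω
    rw [norm_real, Real.norm_eq_abs, abs_sub_comm]
    exact (hp _ hω).le
  have hnear : ‖c * (p.eval b - f b : ℝ)‖ ≤ ε * ‖c‖ := by
    rw [norm_mul, norm_real, Real.norm_eq_abs, mul_comm]
    exact mul_le_mul_of_nonneg_right (hp b hb).le (norm_nonneg c)
  calc _ ≤ _ := hsplit ▸ norm_add_le _ _
    _ ≤ ε * μ.real univ + ε * ‖c‖ := add_le_add hfar hnear
    _ = ε * (μ.real univ + ‖c‖) := by ring

theorem exists_forall_integral_comp_mul_eq_of_moments [IsFiniteMeasure μ]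
    (hw_meas : AEStronglyMeasurable w μ) (hw : ∀ ω, ‖w ω‖ ≤ 1) {T : Ω → ℝ} (hT : Measurable T)
    (hT01 : ∀ᵐ ω ∂μ, T ω ∈ Icc (0 : ℝ) 1) {c β : ℂ} (hc : c ≠ 0)
    (hmom : ∀ n : ℕ, ∫ ω, ((T ω : ℝ) : ℂ) ^ n * w ω ∂μ = c * β ^ n) :
    ∃ b ∈ Icc (0 : ℝ) 1, ∀ f : ℝ → ℝ, Continuous f →
      ∫ ω, ((f (T ω) : ℝ) : ℂ) * w ω ∂μ = c * f b := by
  have hint (n : ℕ) : Integrable (fun ω => ((T ω : ℝ) : ℂ) ^ n * w ω) μ :=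
    integrable_mul_of_norm_le hw_meas hw (by fun_prop) (M := 1) <| by
      filter_upwards [hT01] with ω hω
      simpa [abs_of_nonneg hω.1] using pow_le_one₀ hω.1 hω.2
  have hpoly := integral_eval_mul_eq_of_moments hint hmom
  obtain ⟨b, hb, rfl⟩ := exists_eq_ofReal_mem_Icc_of_norm_eval_le (K := μ.real univ / ‖c‖)
    fun p M hM => by
      have := norm_integral_mul_le hw (g := fun ω => p.eval ((T ω : ℝ) : ℂ)) (M := M) <| by
        filter_upwards [hT01] with ω hω using hM _ hω
      rw [hpoly, norm_mul] at this
      rw [div_mul_eq_mul_div, le_div_iff₀ (norm_pos_iff.2 hc)]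
      linarith
  refine ⟨b, hb, fun f hf => integral_comp_mul_eq_of_forall_polynomial hw_meas hw hT hT01 hb
    (fun p => ?_) hf⟩
  simpa [eval_map, ← ofRealHom_eq_coe, eval₂_at_apply] using hpoly (p.map ofRealHom)

end Density

section Dirac

variable {Ω X : Type*} [MeasurableSpace Ω] {μ : Measure Ω} {w : Ω → ℂ}
  [MetricSpace X] [MeasurableSpace X] [BorelSpace X] {T : Ω → X}

theorem norm_integral_comp_mul_sub_le (hw : ∀ ω, ‖w ω‖ ≤ 1) (hT : Measurable T) (c : ℂ)
    {b : X} {e : X → ℝ} (he : Integrable e (μ.map T + Measure.dirac b)) :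
    ‖∫ ω, ((e (T ω) : ℝ) : ℂ) * w ω ∂μ - c * e b‖
      ≤ (1 + ‖c‖) * ∫ x, ‖e x‖ ∂(μ.map T + Measure.dirac b) := by
  have heμ : Integrable e (μ.map T) := he.mono_measure (Measure.le_add_right le_rfl)
  have hfar : ‖∫ ω, ((e (T ω) : ℝ) : ℂ) * w ω ∂μ‖ ≤ ∫ x, ‖e x‖ ∂(μ.map T) := by
    rw [integral_map hT.aemeasurable heμ.norm.aestronglyMeasurable]
    refine norm_integral_le_of_norm_le
      ((integrable_map_measure heμ.aestronglyMeasurable hT.aemeasurable).1 heμ).norm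
      (ae_of_all _ fun ω => ?_)
    rw [norm_mul, norm_real]
    exact mul_le_of_le_one_right (norm_nonneg _) (hw ω)
  have hnear : ‖c * e b‖ = ‖c‖ * ∫ x, ‖e x‖ ∂(Measure.dirac b) := by
    rw [integral_dirac, norm_mul, norm_real]
  have h₁ : 0 ≤ ∫ x, ‖e x‖ ∂(μ.map T) := integral_nonneg fun _ => norm_nonneg _
  have h₂ : 0 ≤ ∫ x, ‖e x‖ ∂(Measure.dirac b) := integral_nonneg fun _ => norm_nonneg _
  rw [integral_add_measure heμ.norm (integrable_dirac enorm_lt_top)]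
  calc _ ≤ _ := norm_sub_le _ _
    _ ≤ _ := add_le_add hfar hnear.le
    _ ≤ _ := by nlinarith [norm_nonneg c]

theorem setIntegral_preimage_eq_ite_of_forall_boundedContinuous [IsFiniteMeasure μ]
    (hw_meas : AEStronglyMeasurable w μ) (hw : ∀ ω, ‖w ω‖ ≤ 1) (hT : Measurable T)
    {c : ℂ} {b : X} (H : ∀ g : X →ᵇ ℝ, ∫ ω, ((g (T ω) : ℝ) : ℂ) * w ω ∂μ = c * g b)
    {A : Set X} (hA : MeasurableSet A) :
    ∫ ω in T ⁻¹' A, w ω ∂μ = if b ∈ A then c else 0 := by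
  set χ : X → ℝ := A.indicator fun _ => 1
  have hχ : Integrable χ (μ.map T + Measure.dirac b) := (integrable_const 1).indicator hA
  refine eq_of_forall_norm_sub_le_mul (K := 1 + ‖c‖) fun ε hε => ?_
  obtain ⟨g, hgε, hg⟩ := hχ.exists_boundedContinuous_integral_sub_le hε
  have hχT : Integrable (fun ω => ((χ (T ω) : ℝ) : ℂ) * w ω) μ := by
    refine integrable_mul_of_norm_le hw_meas hw (M := 1) ?_ (ae_of_all _ fun ω => ?_)
    · exact (continuous_ofReal.measurable.comp
        ((measurable_const.indicator hA).comp hT)).aestronglyMeasurable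
    · by_cases hω : T ω ∈ A <;> simp [χ, hω]
  have hgT : Integrable (fun ω => ((g (T ω) : ℝ) : ℂ) * w ω) μ := by
    refine integrable_mul_of_norm_le hw_meas hw (M := ‖g‖) ?_ (ae_of_all _ fun ω => ?_)
    · exact (continuous_ofReal.measurable.comp
        (g.continuous.measurable.comp hT)).aestronglyMeasurable
    · simpa using g.norm_coe_le_norm (T ω)
  have hlhs : ∫ ω in T ⁻¹' A, w ω ∂μ = ∫ ω, ((χ (T ω) : ℝ) : ℂ) * w ω ∂μ := by
    rw [← integral_indicator (hT hA)]
    congr 1 with ω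
    by_cases hω : T ω ∈ A <;> simp [χ, hω]
  have hrhs : (if b ∈ A then c else 0) = c * χ b := by
    by_cases hb : b ∈ A <;> simp [χ, hb]
  have hsplit : ∫ ω in T ⁻¹' A, w ω ∂μ - (if b ∈ A then c else 0)
      = ∫ ω, (((χ - g) (T ω) : ℝ) : ℂ) * w ω ∂μ - c * (χ - g) b := by
    simp only [Pi.sub_apply, ofReal_sub, sub_mul]
    rw [hlhs, hrhs, integral_sub hχT hgT, H]
    ring
  rw [hsplit, mul_comm ε]
  exact (norm_integral_comp_mul_sub_le hw hT c (hχ.sub hg)).trans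
    (mul_le_mul_of_nonneg_left hgε (by positivity))

end Dirac

/-- A finite complex measure `h • P` on `[0, ∞)` with nonzero mass whose
Laplace transform satisfies `μ([0,∞))·L(s+t) = L(s)·L(t)` for all `s, t ≥ 0`
is a nonzero multiple of a Dirac mass at some `a ∈ [0, ∞)`. -/
theorem stmt_7 (P : Measure ℝ) [IsFiniteMeasure P] (h : ℝ → ℂ)
    (hmeas : Measurable h) (hnorm : ∀ x, ‖h x‖ = 1)
    (hsupp : P (Set.Ici (0 : ℝ))ᶜ = 0)
    (hmass : ∫ x, h x ∂P ≠ 0)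
    (hcov : ∀ s t : ℝ, 0 ≤ s → 0 ≤ t →
      (∫ x, h x ∂P) * ∫ x, ((Real.exp (-(s + t) * x) : ℝ) : ℂ) * h x ∂P
        = (∫ x, ((Real.exp (-s * x) : ℝ) : ℂ) * h x ∂P) *
            ∫ x, ((Real.exp (-t * x) : ℝ) : ℂ) * h x ∂P) :
    ∃ (c : ℂ) (a : ℝ), c ≠ 0 ∧ 0 ≤ a ∧
      ∀ s : Set ℝ, MeasurableSet s →
        ∫ x in s, h x ∂P = if a ∈ s then c else 0 := by
  set c := ∫ x, h x ∂P
  set L : ℝ → ℂ := fun s => ∫ x, ((Real.exp (-s * x) : ℝ) : ℂ) * h x ∂P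
  set T : ℝ → ℝ := fun x => Real.exp (-x)
  have hTemb : MeasurableEmbedding T := (by fun_prop : Continuous T).measurableEmbedding
    fun x y hxy => neg_injective (Real.exp_injective hxy)
  have hw (x : ℝ) : ‖h x‖ ≤ 1 := (hnorm x).le
  have hT01 : ∀ᵐ x ∂P, T x ∈ Icc (0 : ℝ) 1 := by
    filter_upwards [measure_eq_zero_iff_ae_notMem.1 hsupp] with x hx
    simp only [mem_compl_iff, not_not, mem_Ici] at hx
    exact ⟨(Real.exp_pos _).le, Real.exp_le_one_iff.2 (by linarith)⟩
  have hmom (n : ℕ) : ∫ x, ((T x : ℝ) : ℂ) ^ n * h x ∂P = c * (L 1 / c) ^ n := by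
    rw [← eq_mul_div_pow_of_mul_add hmass (by simp [L, c]) hcov n]
    congr 1 with x
    rw [← ofReal_pow, ← Real.exp_nat_mul, mul_neg, neg_mul]
  obtain ⟨b, hb, hcont⟩ := exists_forall_integral_comp_mul_eq_of_moments
    hmeas.aestronglyMeasurable hw hTemb.measurable hT01 hmass hmom
  have hdirac {A : Set ℝ} (hA : MeasurableSet A) :=
    setIntegral_preimage_eq_ite_of_forall_boundedContinuous hmeas.aestronglyMeasurable hw
      hTemb.measurable (fun g => hcont g g.continuous) hA
  obtain ⟨a, rfl⟩ : b ∈ range T := by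
    by_contra hbT
    have := hdirac hTemb.measurableSet_range
    rw [preimage_range, Measure.restrict_univ, if_neg hbT] at this
    exact hmass this
  refine ⟨c, a, hmass, by simpa [T] using hb.2, fun S hS => ?_⟩
  conv_lhs => rw [← hTemb.injective.preimage_image S]
  rw [hdirac (hTemb.measurableSet_image.2 hS), hTemb.injective.mem_set_image]
end

section
/- Let S be a commutative monoid with identity e, and let f : S × S → ℂ be the generalized Laplace transform of a compactly supported complex regular Borel measure μ on the space S' of nonzero multiplicative functions S → ℂ (with the topology of pointwise convergence), i.e. f(s,t) = ∫ ρ(s)·conj(ρ(t)) dμ(ρ). If f(e,e) ≠ 0 and f(e,e)·f(s,t) = f(s,e)·f(e,t) for all (s,t) ∈ S × S, then there exist c ∈ ℂ \ {0} and γ ∈ S' such that f(s,t) = c·γ(s)·conj(γ(t)) for all s, t ∈ S. -/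
open MeasureTheory Complex

/-- The space of nonzero multiplicative complex-valued functions on a
commutative monoid `S`, with the topology of pointwise convergence
(subspace of the product topology on `S → ℂ`). -/
abbrev MultChar (S : Type*) [CommMonoid S] : Type _ :=
  {ρ : S → ℂ // (∀ s t : S, ρ (s * t) = ρ s * ρ t) ∧ ρ ≠ 0}

/-!
Write `ν = h • P` and `c = ν(1) = f(e,e)`. The hypothesis says `c ∫ u v̄ dν = (∫ u dν)(∫ v̄ dν)`
for `u, v` among the evaluations `ρ ↦ ρ(s)`; by sesquilinearity it persists on the algebra they
span, which consists of bounded functions because `ν` has compact support.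

For one such `x`, comparing Taylor coefficients shows that `∫ e^{v x + w x̄} dν = c⁻¹ F(v) G(w)`,
where `F(v) = ∫ e^{v x} dν` and `G(w) = ∫ e^{w x̄} dν`. At `w = -v̄` the exponential is
unimodular, so `F(v) · conj G(-v̄)` is a bounded entire function, hence the constant `|c|²` by
Liouville. Thus `F` is a zero-free entire function of exponential type, and Borel–Carathéodory
forces `F(v) = c e^{a v}` and then `G(w) = c e^{ā w}`: along `x`, `ν` has the moments of `c δ_a`.

Applied to `x = u₁, u₂, u₁ + u₂`, polarization makes `γ(u) = c⁻¹ ∫ u dν` multiplicative, and the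
moment `∫ x̄ dν = c ā` gives `∫ ū dν = c · conj γ(u)`. On evaluations, `γ(s) = f(s,e) / f(e,e)`.
-/

open Metric Filter Topology ComplexConjugate
open scoped ENNReal

namespace Complex

theorem exists_eq_mul_cexp_of_ne_zero {F : ℂ → ℂ} (hF : Differentiable ℂ F)
    (hF0 : ∀ z, F z ≠ 0) :
    ∃ φ : ℂ → ℂ, Differentiable ℂ φ ∧ φ 0 = 0 ∧ ∀ z, F z = F 0 * cexp (φ z) := by
  have hlogDeriv : Differentiable ℂ fun z => deriv F z / F z :=
    (hF.contDiff.differentiable_deriv_two).div hF hF0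
  obtain ⟨φ, hφ0, hφ⟩ := hlogDeriv.isExactOn_univ.with_val_at 0 0
  have hφ' : ∀ z, HasDerivAt φ (deriv F z / F z) z := fun z => hφ z (Set.mem_univ z)
  have hquot : ∀ z, HasDerivAt (fun w => F w * cexp (-φ w)) 0 z := by
    intro z
    refine ((hF z).hasDerivAt.fun_mul (hφ' z).fun_neg.cexp).congr_deriv ?_
    field_simp [hF0 z]
    ring
  refine ⟨φ, fun z => (hφ' z).differentiableAt, hφ0, fun z => ?_⟩
  have := is_const_of_deriv_eq_zero (fun w => (hquot w).differentiableAt)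
    (fun w => (hquot w).deriv) z 0
  simp only [hφ0, neg_zero, Complex.exp_zero, mul_one] at this
  rw [← this, mul_assoc, ← Complex.exp_add, neg_add_cancel, Complex.exp_zero, mul_one]

theorem eq_add_mul_of_norm_le {φ : ℂ → ℂ} (hφ : Differentiable ℂ φ) {A B : ℝ}
    (hle : ∀ z, ‖φ z‖ ≤ A + B * ‖z‖) (z : ℂ) : φ z = φ 0 + deriv φ 0 * z := by
  have hderiv : ∀ w, ‖deriv φ w‖ ≤ |B| := by
    intro w
    have hcauchy : ∀ r : ℝ, 0 < r → ‖deriv φ w‖ ≤ (A + |B| * ‖w‖) / r + |B| := by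
      intro r hr
      refine (norm_deriv_le_of_forall_mem_sphere_norm_le (C := A + |B| * (‖w‖ + r)) hr
        hφ.diffContOnCl fun u hu => (hle u).trans ?_).trans_eq (by field_simp; ring)
      have hu : ‖u‖ ≤ ‖w‖ + r := by
        linarith [norm_le_norm_add_norm_sub' u w, (mem_sphere_iff_norm.1 hu).le]
      have := (mul_le_mul_of_nonneg_right (le_abs_self B) (norm_nonneg u)).trans
        (mul_le_mul_of_nonneg_left hu (abs_nonneg B))
      linarith
    have hlim : Tendsto (fun r : ℝ => (A + |B| * ‖w‖) / r + |B|) atTop (𝓝 |B|) := by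
      simpa using (tendsto_const_nhds.div_atTop tendsto_id).add_const |B|
    exact ge_of_tendsto hlim ((eventually_gt_atTop 0).mono hcauchy)
  have hconst : ∀ w, deriv φ w = deriv φ 0 := fun w =>
    hφ.contDiff.differentiable_deriv_two.apply_eq_apply_of_bounded
      (isBounded_iff_forall_norm_le.2 ⟨|B|, by rintro _ ⟨u, rfl⟩; exact hderiv u⟩) w 0
  have hlin : ∀ w, HasDerivAt (fun w => φ w - deriv φ 0 * w) 0 w := fun w => by
    refine ((hφ w).hasDerivAt.fun_sub ((hasDerivAt_id w).const_mul (deriv φ 0))).congr_deriv ?_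
    rw [hconst w, mul_one, sub_self]
  have := is_const_of_deriv_eq_zero (fun w => (hlin w).differentiableAt)
    (fun w => (hlin w).deriv) z 0
  simp only [mul_zero, sub_zero] at this
  rw [← this]; ring

theorem eq_add_mul_of_re_le {φ : ℂ → ℂ} (hφ : Differentiable ℂ φ) {A B : ℝ}
    (hre : ∀ z, (φ z).re ≤ A + B * ‖z‖) (z : ℂ) : φ z = φ 0 + deriv φ 0 * z := by
  refine eq_add_mul_of_norm_le hφ (A := 2 * (|A| + 1 + |B|) + 3 * ‖φ 0‖) (B := 4 * |B|)
    (fun u => ?_) z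
  -- these constants come from Borel–Carathéodory on the disc of radius `2 ‖u‖ + 1`
  set R := 2 * ‖u‖ + 1
  set M := |A| + 1 + |B| * R
  have hM : 0 < M := by positivity
  have hmaps : Set.MapsTo φ (ball 0 R) {w | w.re ≤ M} := fun w hw => by
    have hw : ‖w‖ ≤ R := (mem_ball_zero_iff.1 hw).le
    have : B * ‖w‖ ≤ |B| * R :=
      (mul_le_mul_of_nonneg_right (le_abs_self B) (norm_nonneg w)).trans
        (mul_le_mul_of_nonneg_left hw (abs_nonneg B))
    exact (hre w).trans (by linarith [le_abs_self A])
  have hBC := borelCaratheodory hM hφ.differentiableOn hmaps (by positivity)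
    (mem_ball_zero_iff.2 (by linarith [norm_nonneg u]))
  have hR : R - ‖u‖ = ‖u‖ + 1 := by ring
  rw [hR, ← add_div, le_div_iff₀ (by positivity)] at hBC
  have hz := norm_nonneg u
  have h0 := norm_nonneg (φ 0)
  have hB := abs_nonneg B
  rw [← mul_le_mul_iff_left₀ (by positivity : (0:ℝ) < ‖u‖ + 1)]
  nlinarith

theorem exists_eq_mul_cexp_of_norm_le {F : ℂ → ℂ} (hF : Differentiable ℂ F) (hF0 : ∀ z, F z ≠ 0)
    {C B : ℝ} (hle : ∀ z, ‖F z‖ ≤ C * Real.exp (B * ‖z‖)) :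
    ∃ a : ℂ, ∀ z, F z = F 0 * cexp (a * z) := by
  obtain ⟨φ, hφ, hφ0, hFφ⟩ := exists_eq_mul_cexp_of_ne_zero hF hF0
  have hF0' : 0 < ‖F 0‖ := norm_pos_iff.2 (hF0 0)
  have hC : 0 < C := by simpa using hF0'.trans_le (hle 0)
  have hre : ∀ z, (φ z).re ≤ Real.log (C / ‖F 0‖) + B * ‖z‖ := fun z => by
    rw [← Real.exp_le_exp, Real.exp_add, Real.exp_log (by positivity), div_mul_eq_mul_div,
      le_div_iff₀ hF0', mul_comm, ← Complex.norm_exp, ← norm_mul, ← hFφ]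
    exact hle z
  refine ⟨deriv φ 0, fun z => ?_⟩
  rw [hFφ, eq_add_mul_of_re_le hφ hre z, hφ0, zero_add]

end Complex

section Laplace

variable {Ω : Type*} [MeasurableSpace Ω] {P : Measure Ω} {ζ y : Ω → ℂ} {R : ℝ}

/-- The Laplace transform of the complex measure `ζ • P` pushed forward along `y`. -/
noncomputable def laplace (P : Measure Ω) (ζ y : Ω → ℂ) (v : ℂ) : ℂ :=
  ∫ ω, cexp (v * y ω) * ζ ω ∂P

lemma norm_cexp_mul_le {v w : ℂ} (hw : ‖w‖ ≤ R) : ‖cexp (v * w)‖ ≤ Real.exp (R * ‖v‖) :=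
  (norm_exp_le_exp_norm _).trans <| Real.exp_le_exp.2 <| by
    rw [norm_mul, mul_comm]; exact mul_le_mul_of_nonneg_right hw (norm_nonneg v)

lemma integrable_cexp_mul_s8 (hζ : Integrable ζ P) (hy : AEStronglyMeasurable y P)
    (hyR : ∀ᵐ ω ∂P, ‖y ω‖ ≤ R) (v : ℂ) : Integrable (fun ω => cexp (v * y ω) * ζ ω) P :=
  hζ.bdd_mul (by fun_prop) (hyR.mono fun _ hω => norm_cexp_mul_le hω)

lemma norm_laplace_le (hζ : Integrable ζ P) (hyR : ∀ᵐ ω ∂P, ‖y ω‖ ≤ R) (v : ℂ) :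
    ‖laplace P ζ y v‖ ≤ (∫ ω, ‖ζ ω‖ ∂P) * Real.exp (R * ‖v‖) := by
  rw [← integral_mul_const]
  refine norm_integral_le_of_norm_le (hζ.norm.mul_const _) (hyR.mono fun ω hω => ?_)
  rw [norm_mul, mul_comm]
  exact mul_le_mul_of_nonneg_left (norm_cexp_mul_le hω) (norm_nonneg _)

@[simp]
lemma laplace_zero : laplace P ζ y 0 = ∫ ω, ζ ω ∂P := by
  simp [laplace]

lemma laplace_const_mul (a : ℂ) :
    laplace P (fun ω => a * ζ ω) y = fun v => a * laplace P ζ y v := by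
  funext v
  simp only [laplace, mul_left_comm _ a, integral_const_mul]

lemma hasDerivAt_laplace (hζ : Integrable ζ P) (hy : AEStronglyMeasurable y P)
    (hyR : ∀ᵐ ω ∂P, ‖y ω‖ ≤ R) (v : ℂ) :
    HasDerivAt (laplace P ζ y) (laplace P (fun ω => y ω * ζ ω) y v) v := by
  have hbound : ∀ᵐ ω ∂P, ∀ u ∈ ball v 1,
      ‖cexp (u * y ω) * (y ω * ζ ω)‖ ≤ R * Real.exp (R * (‖v‖ + 1)) * ‖ζ ω‖ := by
    refine hyR.mono fun ω hω u hu => ?_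
    have hu' : ‖u‖ ≤ ‖v‖ + 1 := by
      linarith [norm_le_norm_add_norm_sub' u v, mem_ball_iff_norm.1 hu]
    have hR : 0 ≤ R := (norm_nonneg _).trans hω
    rw [norm_mul, norm_mul, ← mul_assoc, mul_comm ‖cexp _‖]
    refine mul_le_mul_of_nonneg_right (mul_le_mul hω ((norm_cexp_mul_le hω).trans ?_)
      (norm_nonneg _) hR) (norm_nonneg _)
    exact Real.exp_le_exp.2 (mul_le_mul_of_nonneg_left hu' hR)
  exact (hasDerivAt_integral_of_dominated_loc_of_deriv_le (ball_mem_nhds v one_pos)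
    (Eventually.of_forall fun u => (integrable_cexp_mul_s8 hζ hy hyR u).aestronglyMeasurable)
    (integrable_cexp_mul_s8 hζ hy hyR v)
    (integrable_cexp_mul_s8 (hζ.bdd_mul hy hyR) hy hyR v).aestronglyMeasurable
    hbound (hζ.norm.const_mul _)
    (ae_of_all _ fun ω u _ => ((hasDerivAt_mul_const (y ω)).cexp.mul_const (ζ ω)).congr_deriv
      (by ring))).2

lemma differentiable_laplace (hζ : Integrable ζ P) (hy : AEStronglyMeasurable y P)
    (hyR : ∀ᵐ ω ∂P, ‖y ω‖ ≤ R) : Differentiable ℂ (laplace P ζ y) :=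
  fun v => (hasDerivAt_laplace hζ hy hyR v).differentiableAt

lemma iteratedDeriv_laplace (hζ : Integrable ζ P) (hy : AEStronglyMeasurable y P)
    (hyR : ∀ᵐ ω ∂P, ‖y ω‖ ≤ R) (n : ℕ) :
    iteratedDeriv n (laplace P ζ y) = laplace P (fun ω => y ω ^ n * ζ ω) y := by
  induction n generalizing ζ with
  | zero => simp
  | succ n ih =>
    rw [iteratedDeriv_succ', funext (hasDerivAt_laplace hζ hy hyR · |>.deriv),
      ih (hζ.bdd_mul hy hyR)]
    simp only [← mul_assoc, pow_succ]

lemma laplace_eq_of_moments {ζ₁ ζ₂ : Ω → ℂ} (hζ₁ : Integrable ζ₁ P) (hζ₂ : Integrable ζ₂ P)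
    (hy : AEStronglyMeasurable y P) (hyR : ∀ᵐ ω ∂P, ‖y ω‖ ≤ R)
    (hmom : ∀ n : ℕ, ∫ ω, y ω ^ n * ζ₁ ω ∂P = ∫ ω, y ω ^ n * ζ₂ ω ∂P) :
    laplace P ζ₁ y = laplace P ζ₂ y := by
  funext v
  rw [← taylorSeries_eq_of_entire' 0 v (differentiable_laplace hζ₁ hy hyR),
    ← taylorSeries_eq_of_entire' 0 v (differentiable_laplace hζ₂ hy hyR)]
  simp only [iteratedDeriv_laplace hζ₁ hy hyR, iteratedDeriv_laplace hζ₂ hy hyR, laplace_zero,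
    hmom]

lemma integral_pow_mul_eq_of_laplace_eq (hζ : Integrable ζ P) (hy : AEStronglyMeasurable y P)
    (hyR : ∀ᵐ ω ∂P, ‖y ω‖ ≤ R) {k a : ℂ} (hζy : ∀ v, laplace P ζ y v = k * cexp (a * v))
    (n : ℕ) : ∫ ω, y ω ^ n * ζ ω ∂P = k * a ^ n := by
  rw [← laplace_zero (y := y), ← congrFun (iteratedDeriv_laplace hζ hy hyR n), funext hζy,
    iteratedDeriv_const_mul_field, iteratedDeriv_cexp_const_mul]
  simp

end Laplace

section Bounded

variable {Ω : Type*} [MeasurableSpace Ω] {P : Measure Ω}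

lemma MeasureTheory.MemLp.exists_ae_norm_le {u : Ω → ℂ} (hu : MemLp u ∞ P) :
    ∃ R : ℝ, ∀ᵐ ω ∂P, ‖u ω‖ ≤ R := by
  obtain ⟨C, hC⟩ := eLpNormEssSup_lt_top_iff_isBoundedUnder.1
    (by simpa [eLpNorm_exponent_top] using hu.2)
  exact ⟨C, (eventually_map.1 hC).mono fun ω hω => by exact_mod_cast hω⟩

lemma MeasureTheory.MemLp.conj {u : Ω → ℂ} (hu : MemLp u ∞ P) :
    MemLp (fun ω => conj (u ω)) ∞ P :=
  hu.of_le (continuous_conj.comp_aestronglyMeasurable hu.1) (ae_of_all _ fun ω => by simp)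

lemma memLp_top_of_mem_span {s : Set (Ω → ℂ)} (hs : ∀ u ∈ s, MemLp u ∞ P) {u : Ω → ℂ}
    (hu : u ∈ Submodule.span ℂ s) : MemLp u ∞ P := by
  induction hu using Submodule.span_induction with
  | mem u hu => exact hs u hu
  | zero => exact MemLp.zero
  | add u v _ _ hu hv => exact hu.add hv
  | smul a u _ hu => exact hu.const_smul a

end Bounded

section RankOne

variable {Ω : Type*} [MeasurableSpace Ω] {P : Measure Ω} {h x : Ω → ℂ} {R : ℝ}

/-- The identity `f(e,e) f(s,t) = f(s,e) f(e,t)`, with the functions `ρ ↦ ρ(s)` replaced by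
arbitrary test functions from `s`. -/
def IsRankOneOn (P : Measure Ω) (h : Ω → ℂ) (s : Set (Ω → ℂ)) : Prop :=
  ∀ u ∈ s, ∀ v ∈ s, (∫ ω, h ω ∂P) * ∫ ω, u ω * conj (v ω) * h ω ∂P =
    (∫ ω, u ω * h ω ∂P) * ∫ ω, conj (v ω) * h ω ∂P

lemma IsRankOneOn.mono {s t : Set (Ω → ℂ)} (hrank : IsRankOneOn P h t) (hst : s ⊆ t) :
    IsRankOneOn P h s :=
  fun u hu v hv => hrank u (hst hu) v (hst hv)

lemma IsRankOneOn.pow_mul_conj_pow (hrank : IsRankOneOn P h (Set.range (x ^ ·))) (m n : ℕ) :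
    (∫ ω, h ω ∂P) * ∫ ω, x ω ^ m * conj (x ω) ^ n * h ω ∂P =
      (∫ ω, x ω ^ m * h ω ∂P) * ∫ ω, conj (x ω) ^ n * h ω ∂P := by
  simpa using hrank _ ⟨m, rfl⟩ _ ⟨n, rfl⟩

theorem IsRankOneOn.laplace_mul_laplace_conj (hrank : IsRankOneOn P h (Set.range (x ^ ·)))
    (hh : Integrable h P) (hx : AEStronglyMeasurable x P) (hxR : ∀ᵐ ω ∂P, ‖x ω‖ ≤ R)
    (hc : ∫ ω, h ω ∂P ≠ 0) (v w : ℂ) :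
    laplace P h x v * laplace P h (fun ω => conj (x ω)) w =
      (∫ ω, h ω ∂P) * laplace P (fun ω => cexp (w * conj (x ω)) * h ω) x v := by
  set c := ∫ ω, h ω ∂P
  have hx' : AEStronglyMeasurable (fun ω => conj (x ω)) P :=
    continuous_conj.comp_aestronglyMeasurable hx
  have hxR' : ∀ᵐ ω ∂P, ‖conj (x ω)‖ ≤ R := hxR.mono fun ω hω => by rwa [RCLike.norm_conj]
  have hxpow (m : ℕ) : Integrable (fun ω => x ω ^ m * h ω) P :=
    hh.bdd_mul (hx.pow m) (hxR.mono fun ω hω => by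
      rw [norm_pow]; exact pow_le_pow_left₀ (norm_nonneg _) hω m)
  have hconj (m : ℕ) : laplace P (fun ω => x ω ^ m * h ω) (fun ω => conj (x ω)) =
      fun w => (c⁻¹ * ∫ ω, x ω ^ m * h ω ∂P) * laplace P h (fun ω => conj (x ω)) w := by
    rw [← laplace_const_mul]
    refine laplace_eq_of_moments (hxpow m) (hh.const_mul _) hx' hxR' fun n => ?_
    simp only [mul_left_comm _ (c⁻¹ * _), integral_const_mul]
    rw [mul_assoc, ← hrank.pow_mul_conj_pow, inv_mul_cancel_left₀ hc]
    simp only [mul_left_comm, mul_assoc]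
  have hjoint : laplace P (fun ω => cexp (w * conj (x ω)) * h ω) x =
      laplace P (fun ω => (c⁻¹ * laplace P h (fun ω => conj (x ω)) w) * h ω) x := by
    refine laplace_eq_of_moments (integrable_cexp_mul_s8 hh hx' hxR' w) (hh.const_mul _) hx hxR
      fun m => ?_
    calc ∫ ω, x ω ^ m * (cexp (w * conj (x ω)) * h ω) ∂P
        = laplace P (fun ω => x ω ^ m * h ω) (fun ω => conj (x ω)) w := by
          simp only [laplace, mul_left_comm]
      _ = _ := congrFun (hconj m) w
      _ = _ := by simp only [mul_left_comm _ (c⁻¹ * _), integral_const_mul]; ring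
  rw [hjoint, laplace_const_mul]
  field_simp

theorem IsRankOneOn.laplace_mul_conj_laplace_conj (hrank : IsRankOneOn P h (Set.range (x ^ ·)))
    (hh : Integrable h P) (hx : AEStronglyMeasurable x P) (hxR : ∀ᵐ ω ∂P, ‖x ω‖ ≤ R)
    (hc : ∫ ω, h ω ∂P ≠ 0) (v : ℂ) :
    laplace P h x v * conj (laplace P h (fun ω => conj (x ω)) (-conj v)) =
      (∫ ω, h ω ∂P) * conj (∫ ω, h ω ∂P) := by
  have hx' : AEStronglyMeasurable (fun ω => conj (x ω)) P :=
    continuous_conj.comp_aestronglyMeasurable hx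
  have hxR' : ∀ᵐ ω ∂P, ‖conj (x ω)‖ ≤ R := hxR.mono fun ω hω => by rwa [RCLike.norm_conj]
  have hdiff : Differentiable ℂ
      fun v => laplace P h x v * conj (laplace P h (fun ω => conj (x ω)) (-conj v)) :=
    (differentiable_laplace hh hx hxR).mul fun v => by
      simpa [Function.comp_def] using
        ((differentiable_laplace hh hx' hxR').comp differentiable_neg (conj v)).conj_conj
  have hbdd (v : ℂ) : ‖laplace P h x v * conj (laplace P h (fun ω => conj (x ω)) (-conj v))‖ ≤
      ‖∫ ω, h ω ∂P‖ * ∫ ω, ‖h ω‖ ∂P := by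
    rw [norm_mul, RCLike.norm_conj, ← norm_mul, hrank.laplace_mul_laplace_conj hh hx hxR hc,
      norm_mul]
    refine mul_le_mul_of_nonneg_left (norm_integral_le_of_norm_le hh.norm
      (ae_of_all _ fun ω => (le_of_eq ?_))) (norm_nonneg _)
    -- `v x - conj (v x)` is purely imaginary
    rw [norm_mul, norm_mul, Complex.norm_exp, Complex.norm_exp, ← mul_assoc, ← Real.exp_add]
    simp [← map_mul]
  rw [hdiff.apply_eq_apply_of_bounded
    (isBounded_iff_forall_norm_le.2 ⟨_, by rintro _ ⟨u, rfl⟩; exact hbdd u⟩) v 0]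
  simp

theorem IsRankOneOn.exists_integral_pow_mul_conj_pow_eq
    (hrank : IsRankOneOn P h (Set.range (x ^ ·))) (hh : Integrable h P) (hx : MemLp x ∞ P)
    (hc : ∫ ω, h ω ∂P ≠ 0) :
    ∃ a : ℂ, ∀ m n : ℕ,
      ∫ ω, x ω ^ m * conj (x ω) ^ n * h ω ∂P = (∫ ω, h ω ∂P) * a ^ m * conj a ^ n := by
  obtain ⟨R, hxR⟩ := hx.exists_ae_norm_le
  set c := ∫ ω, h ω ∂P
  have hx' : AEStronglyMeasurable (fun ω => conj (x ω)) P :=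
    continuous_conj.comp_aestronglyMeasurable hx.1
  have hxR' : ∀ᵐ ω ∂P, ‖conj (x ω)‖ ≤ R := hxR.mono fun ω hω => by rwa [RCLike.norm_conj]
  have hL := hrank.laplace_mul_conj_laplace_conj hh hx.1 hxR hc
  obtain ⟨a, ha⟩ := Complex.exists_eq_mul_cexp_of_norm_le (differentiable_laplace hh hx.1 hxR)
    (fun v hv => hc (by simpa [hv] using hL v)) (C := ∫ ω, ‖h ω‖ ∂P) (B := R)
    (norm_laplace_le hh hxR)
  simp only [laplace_zero] at ha
  have hL' (w : ℂ) : laplace P h (fun ω => conj (x ω)) w = c * cexp (conj a * w) := by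
    have hw := hL (-conj w)
    simp only [ha, map_neg, Complex.conj_conj, neg_neg] at hw
    have hw' : cexp (a * -conj w) * conj (laplace P h (fun ω => conj (x ω)) w) = conj c :=
      mul_left_cancel₀ hc (by rw [← mul_assoc]; exact hw)
    rw [mul_neg, Complex.exp_neg, inv_mul_eq_iff_eq_mul₀ (Complex.exp_ne_zero _)] at hw'
    have hconj := congrArg conj hw'
    rw [Complex.conj_conj, map_mul, Complex.conj_conj, ← Complex.exp_conj, map_mul,
      Complex.conj_conj] at hconj
    rw [hconj, mul_comm]
  refine ⟨a, fun m n => mul_left_cancel₀ hc ?_⟩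
  rw [hrank.pow_mul_conj_pow, integral_pow_mul_eq_of_laplace_eq hh hx.1 hxR ha,
    integral_pow_mul_eq_of_laplace_eq hh hx' hxR' hL']
  ring

end RankOne

section Subalgebra

variable {Ω : Type*} [MeasurableSpace Ω] {P : Measure Ω} {h : Ω → ℂ}

theorem IsRankOneOn.span {s : Set (Ω → ℂ)} (hs : ∀ u ∈ s, MemLp u ∞ P) (hh : Integrable h P)
    (hrank : IsRankOneOn P h s) : IsRankOneOn P h (Submodule.span ℂ s) := by
  have hint₁ {u : Ω → ℂ} (hu : u ∈ Submodule.span ℂ s) : Integrable (fun ω => u ω * h ω) P :=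
    hh.mul_of_top_right (memLp_top_of_mem_span hs hu)
  have hint₂ {u v : Ω → ℂ} (hu : u ∈ Submodule.span ℂ s) (hv : v ∈ Submodule.span ℂ s) :
      Integrable (fun ω => u ω * conj (v ω) * h ω) P :=
    hh.mul_of_top_right ((memLp_top_of_mem_span hs hv).conj.mul (memLp_top_of_mem_span hs hu))
  have hint₃ {v : Ω → ℂ} (hv : v ∈ Submodule.span ℂ s) :
      Integrable (fun ω => conj (v ω) * h ω) P :=
    hh.mul_of_top_right (memLp_top_of_mem_span hs hv).conj
  have hleft : ∀ u ∈ Submodule.span ℂ s, ∀ v ∈ s,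
      (∫ ω, h ω ∂P) * ∫ ω, u ω * conj (v ω) * h ω ∂P =
        (∫ ω, u ω * h ω ∂P) * ∫ ω, conj (v ω) * h ω ∂P := by
    intro u hu v hv
    induction hu using Submodule.span_induction with
    | mem u hu => exact hrank u hu v hv
    | zero => simp
    | add u₁ u₂ hu₁ hu₂ ih₁ ih₂ =>
      simp only [Pi.add_apply, add_mul]
      rw [integral_add (hint₂ hu₁ (Submodule.subset_span hv))
        (hint₂ hu₂ (Submodule.subset_span hv)), integral_add (hint₁ hu₁) (hint₁ hu₂), mul_add,
        ih₁, ih₂, add_mul]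
    | smul a u _ ih =>
      simp only [Pi.smul_apply, smul_eq_mul, mul_assoc, integral_const_mul] at ih ⊢
      rw [mul_left_comm, ih]
  intro u hu v hv
  induction hv using Submodule.span_induction with
  | mem v hv => exact hleft u hu v hv
  | zero => simp
  | add v₁ v₂ hv₁ hv₂ ih₁ ih₂ =>
    simp only [Pi.add_apply, map_add, mul_add, add_mul]
    rw [integral_add (hint₂ hu hv₁) (hint₂ hu hv₂), integral_add (hint₃ hv₁) (hint₃ hv₂),
      mul_add, ih₁, ih₂, mul_add]
  | smul a v _ ih =>
    simp only [Pi.smul_apply, smul_eq_mul, map_mul, mul_left_comm _ (conj a), mul_assoc,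
      integral_const_mul] at ih ⊢
    rw [ih]

variable {A : Subalgebra ℂ (Ω → ℂ)}

theorem IsRankOneOn.integral_mul (hrank : IsRankOneOn P h A) (hA : ∀ u ∈ A, MemLp u ∞ P)
    (hh : Integrable h P) (hc : ∫ ω, h ω ∂P ≠ 0) {u v : Ω → ℂ} (hu : u ∈ A) (hv : v ∈ A) :
    (∫ ω, h ω ∂P) * ∫ ω, u ω * v ω * h ω ∂P = (∫ ω, u ω * h ω ∂P) * ∫ ω, v ω * h ω ∂P := by
  have hsq : ∀ w ∈ A, (∫ ω, h ω ∂P) * ∫ ω, w ω ^ 2 * h ω ∂P = (∫ ω, w ω * h ω ∂P) ^ 2 := by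
    intro w hw
    obtain ⟨a, ha⟩ := IsRankOneOn.exists_integral_pow_mul_conj_pow_eq
      (hrank.mono (Set.range_subset_iff.2 (pow_mem hw))) hh (hA w hw) hc
    have h1 := ha 1 0
    have h2 := ha 2 0
    simp only [pow_one, pow_zero, mul_one] at h1 h2
    rw [h1, h2]
    ring
  have hint : ∀ w ∈ A, Integrable (fun ω => w ω * h ω) P :=
    fun w hw => hh.mul_of_top_right (hA w hw)
  -- polarization of `w ↦ ∫ w² h`
  have hexpand : ∫ ω, (u ω + v ω) ^ 2 * h ω ∂P = ∫ ω, u ω ^ 2 * h ω ∂P +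
      2 * ∫ ω, u ω * v ω * h ω ∂P + ∫ ω, v ω ^ 2 * h ω ∂P := by
    have hu2 : Integrable (fun ω => u ω ^ 2 * h ω) P := hint _ (pow_mem hu 2)
    have huv : Integrable (fun ω => 2 * (u ω * v ω * h ω)) P :=
      (hint _ (mul_mem hu hv)).const_mul 2
    have hv2 : Integrable (fun ω => v ω ^ 2 * h ω) P := hint _ (pow_mem hv 2)
    rw [← integral_const_mul, ← integral_add hu2 huv, ← integral_add (hu2.fun_add huv) hv2]
    congr 1; funext ω; ring
  have huv := hsq _ (add_mem hu hv)
  simp only [Pi.add_apply, add_mul] at huv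
  rw [hexpand, integral_add (hint u hu) (hint v hv)] at huv
  linear_combination (huv - hsq u hu - hsq v hv) / 2

theorem IsRankOneOn.integral_conj_mul (hrank : IsRankOneOn P h A) (hA : ∀ u ∈ A, MemLp u ∞ P)
    (hh : Integrable h P) (hc : ∫ ω, h ω ∂P ≠ 0) {u : Ω → ℂ} (hu : u ∈ A) :
    ∫ ω, conj (u ω) * h ω ∂P = (∫ ω, h ω ∂P) * conj ((∫ ω, h ω ∂P)⁻¹ * ∫ ω, u ω * h ω ∂P) := by
  obtain ⟨a, ha⟩ := IsRankOneOn.exists_integral_pow_mul_conj_pow_eq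
    (hrank.mono (Set.range_subset_iff.2 (pow_mem hu))) hh (hA u hu) hc
  have h1 := ha 1 0
  have h1' := ha 0 1
  simp only [pow_one, pow_zero, mul_one, one_mul] at h1 h1'
  rw [h1, h1', inv_mul_cancel_left₀ hc]

theorem IsRankOneOn.exists_monoidHom {M : Type*} [Monoid M] (e : M →* (Ω → ℂ))
    (he : ∀ s, MemLp (e s) ∞ P) (hh : Integrable h P) (hc : ∫ ω, h ω ∂P ≠ 0)
    (hrank : IsRankOneOn P h (Set.range e)) :
    ∃ χ : M →* ℂ, ∀ s t,
      ∫ ω, e s ω * conj (e t ω) * h ω ∂P = (∫ ω, h ω ∂P) * χ s * conj (χ t) := by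
  have hgen : ∀ u ∈ Set.range e, MemLp u ∞ P := by rintro _ ⟨s, rfl⟩; exact he s
  have hmem {u : Ω → ℂ} :
      u ∈ Algebra.adjoin ℂ (Set.range e) ↔ u ∈ Submodule.span ℂ (Set.range e) := by
    rw [← Subalgebra.mem_toSubmodule, Algebra.adjoin_eq_span, ← MonoidHom.coe_mrange,
      Submonoid.closure_eq]
  have hA : ∀ u ∈ Algebra.adjoin ℂ (Set.range e), MemLp u ∞ P :=
    fun u hu => memLp_top_of_mem_span hgen (hmem.1 hu)
  have hrankA : IsRankOneOn P h (Algebra.adjoin ℂ (Set.range e)) := fun u hu v hv =>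
    hrank.span hgen hh u (hmem.1 hu) v (hmem.1 hv)
  have he_mem (s : M) : e s ∈ Algebra.adjoin ℂ (Set.range e) := Algebra.subset_adjoin ⟨s, rfl⟩
  let χ : M →* ℂ :=
    { toFun s := (∫ ω, h ω ∂P)⁻¹ * ∫ ω, e s ω * h ω ∂P
      map_one' := by simp [hc]
      map_mul' s t := by
        have := hrankA.integral_mul hA hh hc (he_mem s) (he_mem t)
        simp only [map_mul, Pi.mul_apply]
        rw [inv_mul_eq_iff_eq_mul₀ hc]
        refine mul_left_cancel₀ hc (this.trans ?_)
        field_simp }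
  refine ⟨χ, fun s t => mul_left_cancel₀ hc ?_⟩
  rw [hrankA _ (he_mem s) _ (he_mem t), hrankA.integral_conj_mul hA hh hc (he_mem t)]
  simp only [χ, MonoidHom.coe_mk, OneHom.coe_mk]
  field_simp

end Subalgebra

namespace MultChar

variable {S : Type*} [CommMonoid S]

lemma apply_one (ρ : MultChar S) : ρ.1 1 = 1 := by
  obtain ⟨s, hs⟩ := Function.ne_iff.1 ρ.2.2
  exact mul_left_cancel₀ hs (by rw [← ρ.2.1, mul_one, mul_one])

variable (S) in
def eval : S →* (MultChar S → ℂ) where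
  toFun s ρ := ρ.1 s
  map_one' := funext apply_one
  map_mul' s t := funext fun ρ => ρ.2.1 s t

@[simp]
lemma eval_apply (s : S) (ρ : MultChar S) : eval S s ρ = ρ.1 s := rfl

lemma memLp_eval {P : Measure (MultChar S)}
    (hsupp : ∃ K : Set (MultChar S), IsCompact K ∧ P Kᶜ = 0) (s : S) : MemLp (eval S s) ∞ P := by
  obtain ⟨K, hK, hPK⟩ := hsupp
  obtain ⟨R, hR⟩ := hK.exists_bound_of_continuousOn
    ((continuous_apply s).comp continuous_subtype_val).continuousOn
  have hK : ∀ᵐ ρ ∂P, ρ ∈ K := by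
    rw [ae_iff]
    exact hPK
  exact memLp_top_of_bound
    ((measurable_pi_apply s).comp measurable_subtype_coe).aestronglyMeasurable R (hK.mono hR)

end MultChar

/-- Maserick-type rigidity: if the generalized Laplace transform `f` of a
compactly supported complex measure `h • P` on `S'` satisfies
`f(e,e) ≠ 0` and `f(e,e)·f(s,t) = f(s,e)·f(e,t)`, then
`f(s,t) = c·γ(s)·conj(γ(t))` for some `c ≠ 0` and some `γ ∈ S'`. -/
theorem stmt_8 {S : Type*} [CommMonoid S]
    (P : Measure (MultChar S)) [IsFiniteMeasure P]
    (h : MultChar S → ℂ) (hmeas : Measurable h) (hnorm : ∀ ρ, ‖h ρ‖ = 1)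
    (hsupp : ∃ K : Set (MultChar S), IsCompact K ∧ P Kᶜ = 0)
    (f : S × S → ℂ)
    (hf : ∀ s t : S, f (s, t) = ∫ ρ, ρ.1 s * (starRingEnd ℂ) (ρ.1 t) * h ρ ∂P)
    (h1 : f (1, 1) ≠ 0)
    (heq : ∀ s t : S, f (1, 1) * f (s, t) = f (s, 1) * f (1, t)) :
    ∃ (c : ℂ) (γ : MultChar S), c ≠ 0 ∧
      ∀ s t : S, f (s, t) = c * γ.1 s * (starRingEnd ℂ) (γ.1 t) := by
  have hh : Integrable h P := (integrable_const (1 : ℝ)).mono' hmeas.aestronglyMeasurable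
    (ae_of_all _ fun ρ => (hnorm ρ).le)
  have hc : f (1, 1) = ∫ ρ, h ρ ∂P := by simp [hf, MultChar.apply_one]
  have hrank : IsRankOneOn P h (Set.range (MultChar.eval S)) := by
    rintro _ ⟨s, rfl⟩ _ ⟨t, rfl⟩
    simpa [hf, MultChar.apply_one] using heq s t
  obtain ⟨χ, hχ⟩ := hrank.exists_monoidHom (MultChar.eval S) (MultChar.memLp_eval hsupp) hh
    (hc ▸ h1)
  have hχ_ne : (χ : S → ℂ) ≠ 0 := fun h0 => one_ne_zero ((map_one χ).symm.trans (congrFun h0 1))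
  refine ⟨f (1, 1), ⟨χ, map_mul χ, hχ_ne⟩, h1, fun s t => ?_⟩
  rw [hf, hc]
  exact hχ s t
end

section
/- Let Γ ⊂ ℂ be a compact subset of the closed disc of radius 1/2 centered at 0, let μ be a complex Borel measure on Γ with μ(Γ) = 1, and let F : Γ → ℂ be continuous. Suppose for all m, n ∈ ℕ: ∫ zⁿ conj(z)ᵐ |F(z)|² dμ(z) = (∫ zⁿ F(z) dμ(z))·(∫ conj(z)ᵐ conj(F(z)) dμ(z)). Then for every bounded holomorphic f on the unit disc 𝔻, the function z ↦ ∫_Γ f(w)·K(z,w) |F(w)|² dμ(w) (with K the Bergman kernel of 𝔻) lies in the one-dimensional span of the function z ↦ ∫_Γ K(z,w)·conj(F(w)) dμ(w); i.e., the Toeplitz operator with symbol |F|²μ has rank at most 1. -/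
open MeasureTheory Complex Filter Metric
open scoped NNReal ComplexConjugate

/-!
Expand `f(w) = ∑ cₙ wⁿ` and `K(z, w) = π⁻¹ ∑ (m + 1) zᵐ w̄ᵐ`; both series converge absolutely
and uniformly for `|w| ≤ 1/2`. Integrating termwise, the factorization of the mixed moments
`∫ wⁿ w̄ᵐ |F|² dμ` extends to `∫ f K(z, ·) |F|² dμ = (∫ f F dμ) · ∫ K(z, ·) F̄ dμ`, so every
transform is the multiple `∫ f F dμ` of the single function `z ↦ ∫ K(z, w) F̄(w) dμ(w)`.
-/

section PowerSeriesIntegrals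

variable {α 𝕜 : Type*} [MeasurableSpace α] [RCLike 𝕜] {μ : Measure α}

theorem MeasureTheory.AEStronglyMeasurable.of_hasSum {E : Type*} [NormedAddCommGroup E]
    {f : ℕ → α → E} {g : α → E} (hf : ∀ n, AEStronglyMeasurable (f n) μ)
    (hg : ∀ᵐ x ∂μ, HasSum (fun n => f n x) (g x)) : AEStronglyMeasurable g μ :=
  aestronglyMeasurable_of_tendsto_ae atTop
    (fun n => Finset.aestronglyMeasurable_fun_sum (Finset.range n) fun i _ => hf i)
    (hg.mono fun _ hx => hx.tendsto_sum_nat)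

theorem hasSum_integral_mul_of_hasSum_pow {u g φ : α → 𝕜} {a : ℕ → 𝕜} {r : ℝ}
    (hu : AEStronglyMeasurable u μ) (hur : ∀ᵐ x ∂μ, ‖u x‖ ≤ r)
    (ha : Summable fun n => ‖a n‖ * r ^ n)
    (hφ : ∀ᵐ x ∂μ, HasSum (fun n => a n * u x ^ n) (φ x)) (hg : Integrable g μ) :
    HasSum (fun n => a n * ∫ x, u x ^ n * g x ∂μ) (∫ x, φ x * g x ∂μ) := by
  simp_rw [← integral_const_mul]
  refine hasSum_integral_of_dominated_convergence (fun n x => ‖a n‖ * r ^ n * ‖g x‖)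
    (fun n => ((hu.pow n).mul hg.1).const_mul _) (fun n => ?_)
    (Eventually.of_forall fun x => ha.mul_right _) ?_ ?_
  · filter_upwards [hur] with x hx
    rw [norm_mul, norm_mul, norm_pow, ← mul_assoc]
    gcongr
  · simp_rw [tsum_mul_right]
    exact hg.norm.const_mul _
  · filter_upwards [hφ] with x hx
    simpa only [mul_assoc] using hx.mul_right (g x)

theorem integral_mul_mul_eq_of_moments_factor {u v G p q φ ψ : α → 𝕜} {a b : ℕ → 𝕜} {r s : ℝ}
    (hu : AEStronglyMeasurable u μ) (hur : ∀ᵐ x ∂μ, ‖u x‖ ≤ r)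
    (hv : AEStronglyMeasurable v μ) (hvs : ∀ᵐ x ∂μ, ‖v x‖ ≤ s)
    (ha : Summable fun n => ‖a n‖ * r ^ n) (hb : Summable fun m => ‖b m‖ * s ^ m)
    (hφ : ∀ᵐ x ∂μ, HasSum (fun n => a n * u x ^ n) (φ x))
    (hψ : ∀ᵐ x ∂μ, HasSum (fun m => b m * v x ^ m) (ψ x))
    (hG : Integrable G μ) (hp : Integrable p μ) (hq : Integrable q μ)
    (hmom : ∀ m n : ℕ, ∫ x, u x ^ n * v x ^ m * G x ∂μ
      = (∫ x, u x ^ n * p x ∂μ) * ∫ x, v x ^ m * q x ∂μ) :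
    ∫ x, φ x * ψ x * G x ∂μ = (∫ x, φ x * p x ∂μ) * ∫ x, ψ x * q x ∂μ := by
  have hψ_meas : AEStronglyMeasurable ψ μ :=
    .of_hasSum (fun m => (hv.pow m).const_mul (b m)) hψ
  have hψ_le : ∀ᵐ x ∂μ, ‖ψ x‖ ≤ ∑' m, ‖b m‖ * s ^ m := by
    filter_upwards [hψ, hvs] with x hx hxs
    refine hx.norm_le_of_bounded hb.hasSum fun m => ?_
    rw [norm_mul, norm_pow]
    gcongr
  simp_rw [mul_assoc] at hmom
  have hmom_ψ : ∀ n : ℕ, ∫ x, u x ^ n * (ψ x * G x) ∂μ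
      = (∫ x, u x ^ n * p x ∂μ) * ∫ x, ψ x * q x ∂μ := by
    intro n
    have huG : Integrable (fun x => u x ^ n * G x) μ :=
      hG.bdd_mul (hu.pow n) (hur.mono fun x hx => by
        rw [norm_pow]
        exact pow_le_pow_left₀ (norm_nonneg _) hx n)
    have h1 := hasSum_integral_mul_of_hasSum_pow hv hvs hb hψ huG
    simp only [mul_left_comm (v _ ^ _), mul_left_comm (ψ _), hmom] at h1
    refine h1.unique ?_
    simpa only [mul_left_comm] using
      (hasSum_integral_mul_of_hasSum_pow hv hvs hb hψ hq).mul_left (∫ x, u x ^ n * p x ∂μ)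
  have hψG : Integrable (fun x => ψ x * G x) μ := hG.bdd_mul hψ_meas hψ_le
  have h1 := hasSum_integral_mul_of_hasSum_pow hu hur ha hφ hψG
  simp only [hmom_ψ] at h1
  simp_rw [mul_assoc]
  refine h1.unique ?_
  simpa only [mul_assoc] using
    (hasSum_integral_mul_of_hasSum_pow hu hur ha hφ hp).mul_right (∫ x, ψ x * q x ∂μ)

end PowerSeriesIntegrals

theorem ContinuousOn.integrable_of_ae_mem {X E : Type*} [TopologicalSpace X] [T2Space X]
    [MeasurableSpace X] [OpensMeasurableSpace X] [NormedAddCommGroup E] {μ : Measure X}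
    [IsFiniteMeasureOnCompacts μ] {K : Set X} {g : X → E} (hg : ContinuousOn g K)
    (hK : IsCompact K) (hμK : ∀ᵐ x ∂μ, x ∈ K) : Integrable g μ := by
  have hgK : IntegrableOn g K μ := hg.integrableOn_compact hK
  rwa [IntegrableOn, Measure.restrict_eq_self_of_ae_mem hμK] at hgK

theorem DifferentiableOn.exists_hasSum_pow_of_lt {f : ℂ → ℂ} {r R : ℝ≥0}
    (hf : DifferentiableOn ℂ f (ball 0 R)) (hrR : r < R) :
    ∃ c : ℕ → ℂ, Summable (fun n => ‖c n‖ * r ^ n) ∧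
      ∀ w ∈ closedBall (0 : ℂ) r, HasSum (fun n => c n * w ^ n) (f w) := by
  obtain ⟨ρ, hrρ, hρR⟩ := exists_between hrR
  have hp := (hf.mono (closedBall_subset_ball (NNReal.coe_lt_coe.mpr hρR))).hasFPowerSeriesOnBall
    (hrρ.trans_le' bot_le)
  refine ⟨(cauchyPowerSeries f 0 ρ).coeff, ?_, fun w hw => ?_⟩
  · simpa [FormalMultilinearSeries.norm_apply_eq_norm_coef] using
      (cauchyPowerSeries f 0 ρ).summable_norm_mul_pow (hp.r_le.trans_lt' (mod_cast hrρ))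
  · have hw' : w ∈ eball (0 : ℂ) ρ := by
      rw [eball_coe, mem_ball, dist_zero_right]
      exact (mem_closedBall_zero_iff.mp hw).trans_lt hrρ
    simpa [FormalMultilinearSeries.apply_eq_pow_smul_coeff, mul_comm] using hp.hasSum hw'

theorem hasSum_bergmanKernel {z w : ℂ} (h : ‖z * conj w‖ < 1) :
    HasSum (fun m : ℕ => (Real.pi : ℂ)⁻¹ * (m + 1) * z ^ m * conj w ^ m)
      ((Real.pi : ℂ)⁻¹ * ((1 - z * conj w) ^ 2)⁻¹) := by
  simpa [mul_pow, mul_assoc] using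
    (hasSum_choose_mul_geometric_of_norm_lt_one 1 h).mul_left (Real.pi : ℂ)⁻¹

theorem summable_bergmanKernel_coeff {z : ℂ} {s : ℝ} (hs : 0 ≤ s) (h : ‖z‖ * s < 1) :
    Summable fun m : ℕ => ‖(Real.pi : ℂ)⁻¹ * (m + 1) * z ^ m‖ * s ^ m := by
  have ht : ‖‖z‖ * s‖ < 1 := by rwa [Real.norm_of_nonneg (by positivity)]
  refine ((summable_choose_mul_geometric_of_norm_lt_one 1 ht).mul_left |Real.pi|⁻¹).congr
    fun m => ?_
  rw [norm_mul, norm_mul, norm_inv, norm_pow, Complex.norm_real, mul_pow]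
  norm_cast
  simp
  ring

theorem stmt_11_general (Γ : Set ℂ) (hΓ : IsCompact Γ)
    (hΓball : Γ ⊆ Metric.closedBall (0 : ℂ) (1 / 2))
    (P : Measure ℂ) [IsFiniteMeasure P] (h : ℂ → ℂ)
    (hmeas : Measurable h) (hnorm : ∀ z, ‖h z‖ = 1)
    (hsupp : P Γᶜ = 0)
    (F : ℂ → ℂ) (hF : ContinuousOn F Γ)
    (hcov : ∀ m n : ℕ,
      ∫ z, z ^ n * (starRingEnd ℂ) z ^ m * ((‖F z‖ ^ 2 : ℝ) : ℂ) * h z ∂P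
        = (∫ z, z ^ n * F z * h z ∂P) *
            ∫ z, (starRingEnd ℂ) z ^ m * (starRingEnd ℂ) (F z) * h z ∂P) :
    ∀ f : ℂ → ℂ, DifferentiableOn ℂ f (Metric.ball (0 : ℂ) 1) →
      (∃ C : ℝ, ∀ z ∈ Metric.ball (0 : ℂ) 1, ‖f z‖ ≤ C) →
      ∃ a : ℂ, ∀ z ∈ Metric.ball (0 : ℂ) 1,
        ∫ w, f w * ((Real.pi : ℂ))⁻¹ * ((1 - z * (starRingEnd ℂ) w) ^ 2)⁻¹ *
            ((‖F w‖ ^ 2 : ℝ) : ℂ) * h w ∂P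
          = a * ∫ w, ((Real.pi : ℂ))⁻¹ * ((1 - z * (starRingEnd ℂ) w) ^ 2)⁻¹ *
              (starRingEnd ℂ) (F w) * h w ∂P := by
  intro f hf _
  have hΓae : ∀ᵐ w ∂P, w ∈ Γ :=
    (measure_eq_zero_iff_ae_notMem.mp hsupp).mono fun w hw => by simpa using hw
  have hnorm_le : ∀ᵐ w ∂P, ‖w‖ ≤ (1 / 2 : ℝ≥0) :=
    hΓae.mono fun w hw => by simpa using hΓball hw
  have hint : ∀ g : ℂ → ℂ, ContinuousOn g Γ → Integrable (fun w => g w * h w) P := fun g hg =>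
    (hg.integrable_of_ae_mem hΓ hΓae).mul_bdd hmeas.aestronglyMeasurable
      (ae_of_all _ fun w => (hnorm w).le)
  obtain ⟨c, hc, hfc⟩ := hf.exists_hasSum_pow_of_lt (r := 1 / 2) (R := 1) (by norm_num)
  refine ⟨∫ w, f w * (F w * h w) ∂P, fun z hz => ?_⟩
  have hz' : ‖z‖ < 1 := mem_ball_zero_iff.mp hz
  have key := integral_mul_mul_eq_of_moments_factor (u := id) (v := conj)
    (ψ := fun w => (Real.pi : ℂ)⁻¹ * ((1 - z * conj w) ^ 2)⁻¹)
    (G := fun w => ((‖F w‖ ^ 2 : ℝ) : ℂ) * h w) aestronglyMeasurable_id hnorm_le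
    continuous_conj.aestronglyMeasurable (by simpa using hnorm_le) hc
    (summable_bergmanKernel_coeff (s := (1 / 2 : ℝ≥0)) (by positivity) (by push_cast; linarith))
    (hΓae.mono fun w hw => hfc w (by simpa using hΓball hw))
    (hΓae.mono fun w hw => hasSum_bergmanKernel (by
      rw [norm_mul, norm_conj]
      nlinarith [norm_nonneg z, mem_closedBall_zero_iff.mp (hΓball hw)]))
    (hint _ (continuous_ofReal.comp_continuousOn (hF.norm.pow 2))) (hint _ hF)
    (hint (fun w => conj (F w)) (continuous_conj.comp_continuousOn hF))
    (fun m n => by simpa only [mul_assoc, id] using hcov m n)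
  simp only [mul_assoc] at key ⊢
  exact key

/-- If the measure `h • P` supported on a compact `Γ` inside the disc of
radius `1/2` has mass `1` and satisfies the covariance equation w.r.t. `F`,
then the Toeplitz operator with symbol `|F|²μ` has rank at most 1: for every
bounded holomorphic `f` on `𝔻`, the transform of `f` is a scalar multiple of
`z ↦ ∫ K(z,w) conj(F(w)) dμ(w)`. -/
theorem stmt_11 (Γ : Set ℂ) (hΓ : IsCompact Γ)
    (hΓball : Γ ⊆ Metric.closedBall (0 : ℂ) (1 / 2))
    (P : Measure ℂ) [IsFiniteMeasure P] (h : ℂ → ℂ)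
    (hmeas : Measurable h) (hnorm : ∀ z, ‖h z‖ = 1)
    (hsupp : P Γᶜ = 0)
    (hmass : ∫ z, h z ∂P = 1)
    (F : ℂ → ℂ) (hF : ContinuousOn F Γ)
    (hcov : ∀ m n : ℕ,
      ∫ z, z ^ n * (starRingEnd ℂ) z ^ m * ((‖F z‖ ^ 2 : ℝ) : ℂ) * h z ∂P
        = (∫ z, z ^ n * F z * h z ∂P) *
            ∫ z, (starRingEnd ℂ) z ^ m * (starRingEnd ℂ) (F z) * h z ∂P) :
    ∀ f : ℂ → ℂ, DifferentiableOn ℂ f (Metric.ball (0 : ℂ) 1) →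
      (∃ C : ℝ, ∀ z ∈ Metric.ball (0 : ℂ) 1, ‖f z‖ ≤ C) →
      ∃ a : ℂ, ∀ z ∈ Metric.ball (0 : ℂ) 1,
        ∫ w, f w * ((Real.pi : ℂ))⁻¹ * ((1 - z * (starRingEnd ℂ) w) ^ 2)⁻¹ *
            ((‖F w‖ ^ 2 : ℝ) : ℂ) * h w ∂P
          = a * ∫ w, ((Real.pi : ℂ))⁻¹ * ((1 - z * (starRingEnd ℂ) w) ^ 2)⁻¹ *
              (starRingEnd ℂ) (F w) * h w ∂P :=
  stmt_11_general Γ hΓ hΓball P h hmeas hnorm hsupp F hF hcov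
end

section
/- Let Γ ⊂ ℂ be compact, μ a complex Borel measure on Γ with μ(Γ) = 1, F : Γ → ℂ continuous, and suppose μ satisfies ∫ zⁿ conj(z)ᵐ |F|² dμ = (∫ zⁿ F dμ)(∫ conj(z)ᵐ conj(F) dμ) for all m, n ∈ ℕ. Then the following are equivalent: (i) F·μ ≠ 0; (ii) ∫ F dμ ≠ 0; (iii) ∫ conj(F) dμ ≠ 0; (iv) ∫ |F|² dμ ≠ 0. -/
open MeasureTheory Complex Metric Set Nat Topology Filter

namespace Stmt12Aux


noncomputable def T (c : ℕ → ℂ) (σ : ℂ) : ℂ := ∑' n, σ ^ n * c n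

lemma summable_norm_T {c : ℕ → ℂ} {K R : ℝ} (hc : ∀ n, ‖c n‖ ≤ K * R ^ n / n !)
    (σ : ℂ) : Summable (fun n => ‖σ ^ n * c n‖) := by
  refine Summable.of_nonneg_of_le (fun n => norm_nonneg _) (fun n => ?_)
    ((Real.summable_pow_div_factorial (‖σ‖ * R)).mul_left K)
  · 
    rw [norm_mul, norm_pow]
    calc ‖σ‖ ^ n * ‖c n‖ ≤ ‖σ‖ ^ n * (K * R ^ n / n !) := by
          apply mul_le_mul_of_nonneg_left (hc n) (by positivity)
      _ = K * ((‖σ‖ * R) ^ n / n !) := by rw [mul_pow]; ring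

lemma summable_T {c : ℕ → ℂ} {K R : ℝ} (hc : ∀ n, ‖c n‖ ≤ K * R ^ n / n !) (σ : ℂ) :
    Summable (fun n => σ ^ n * c n) :=
  (summable_norm_T hc σ).of_norm

lemma differentiable_T {c : ℕ → ℂ} {K R : ℝ} (hR : 0 ≤ R)
    (hc : ∀ n, ‖c n‖ ≤ K * R ^ n / n !) : Differentiable ℂ (T c) := by
  intro σ₀
  have hball : σ₀ ∈ ball (0:ℂ) (‖σ₀‖ + 1) := by
    simp [mem_ball, dist_eq_norm]
  have hdiff : DifferentiableOn ℂ (T c) (ball (0:ℂ) (‖σ₀‖ + 1)) := by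
    have h1 : TendstoUniformlyOn (fun (N : ℕ) σ => ∑ n ∈ Finset.range N, σ ^ n * c n)
        (T c) Filter.atTop (ball (0:ℂ) (‖σ₀‖ + 1)) := by
      apply tendstoUniformlyOn_tsum_nat (u := fun n => K * (((‖σ₀‖ + 1) * R) ^ n / n !))
        ((Real.summable_pow_div_factorial _).mul_left K)
      intro n x hx
      rw [norm_mul, norm_pow]
      have hxn : ‖x‖ ≤ ‖σ₀‖ + 1 := by
        rw [mem_ball, dist_eq_norm, sub_zero] at hx; linarith
      calc ‖x‖ ^ n * ‖c n‖ ≤ (‖σ₀‖ + 1) ^ n * (K * R ^ n / n !) := by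
            apply mul_le_mul (pow_le_pow_left₀ (norm_nonneg _) hxn n) (hc n)
              (norm_nonneg _) (by positivity)
        _ = K * (((‖σ₀‖ + 1) * R) ^ n / n !) := by rw [mul_pow]; ring
    exact h1.tendstoLocallyUniformlyOn.differentiableOn
      (Filter.Eventually.of_forall fun N => (Differentiable.fun_sum
        (fun n _ => (differentiable_pow n).mul_const (c n))).differentiableOn)
      isOpen_ball
  exact (hdiff.differentiableAt (isOpen_ball.mem_nhds hball))

lemma continuous_T {c : ℕ → ℂ} {K R : ℝ} (hR : 0 ≤ R)
    (hc : ∀ n, ‖c n‖ ≤ K * R ^ n / n !) : Continuous (T c) :=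
  (differentiable_T hR hc).continuous

lemma T_zero {c : ℕ → ℂ} {K R : ℝ} (hc : ∀ n, ‖c n‖ ≤ K * R ^ n / n !) :
    T c 0 = c 0 := by
  rw [T, tsum_eq_single 0]
  · simp
  · intro n hn; simp [zero_pow hn]

lemma base0 {c : ℕ → ℂ} {K R : ℝ} (hR : 0 ≤ R)
    (hc : ∀ n, ‖c n‖ ≤ K * R ^ n / n !) (hz : ∀ σ : ℂ, σ ≠ 0 → T c σ = 0) :
    c 0 = 0 := by
  have hseq : Filter.Tendsto (fun k : ℕ => (((1 : ℝ) / (k + 1) : ℝ) : ℂ)) Filter.atTop (𝓝 0) := by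
    have := tendsto_one_div_add_atTop_nhds_zero_nat (𝕜 := ℝ)
    have h2 := (Complex.continuous_ofReal.tendsto (0 : ℝ)).comp this
    simpa [Function.comp_def] using h2
  have h1 : Filter.Tendsto (fun k : ℕ => T c (((1 : ℝ) / (k + 1) : ℝ) : ℂ)) Filter.atTop
      (𝓝 (T c 0)) := ((continuous_T hR hc).tendsto 0).comp hseq
  have h2 : ∀ k : ℕ, T c (((1 : ℝ) / (k + 1) : ℝ) : ℂ) = 0 := by
    intro k
    apply hz
    simp only [ne_eq, ofReal_eq_zero]
    positivity
  have h3 : Filter.Tendsto (fun k : ℕ => T c (((1 : ℝ) / (k + 1) : ℝ) : ℂ)) Filter.atTop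
      (𝓝 0) := by simp only [h2]; exact tendsto_const_nhds
  have h4 : T c 0 = 0 := tendsto_nhds_unique h1 h3
  have h5 : T c 0 = c 0 := by
    rw [T, tsum_eq_single 0]
    · simp
    · intro n hn; simp [zero_pow hn]
  rw [← h5, h4]

lemma ext_zero : ∀ (N : ℕ) (c : ℕ → ℂ) (K R : ℝ), 0 ≤ R →
    (∀ n, ‖c n‖ ≤ K * R ^ n / n !) → (∀ σ : ℂ, σ ≠ 0 → T c σ = 0) → c N = 0 := by
  intro N
  induction N with
  | zero => intro c K R hR hc hz; exact base0 hR hc hz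
  | succ N ih =>
    intro c K R hR hc hz
    have hc0 : c 0 = 0 := base0 hR hc hz
    set c' : ℕ → ℂ := fun n => c (n + 1) with hc'
    have hb' : ∀ n, ‖c' n‖ ≤ (K * R) * R ^ n / n ! := by
      intro n
      calc ‖c (n+1)‖ ≤ K * R ^ (n+1) / (n+1)! := hc (n+1)
        _ ≤ K * R ^ (n+1) / n ! := by
            apply div_le_div_of_nonneg_left ?_ (by positivity) ?_
            · have h0 := hc 0
              simp only [pow_zero, Nat.factorial_zero, Nat.cast_one, div_one, mul_one] at h0
              have hK : (0:ℝ) ≤ K := le_trans (norm_nonneg _) h0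
              positivity
            · exact_mod_cast Nat.factorial_le (Nat.le_succ n)
        _ = (K * R) * R ^ n / n ! := by rw [pow_succ]; ring
    have hz' : ∀ σ : ℂ, σ ≠ 0 → T c' σ = 0 := by
      intro σ hσ
      have hsum : Summable (fun n => σ ^ n * c n) := summable_T hc σ
      have e1 : σ * T c' σ = T c σ - c 0 := by
        rw [T, T, ← tsum_mul_left]
        rw [Summable.tsum_eq_zero_add hsum]
        have : ∀ n : ℕ, σ * (σ ^ n * c' n) = σ ^ (n+1) * c (n+1) := by
          intro n; rw [hc']; ring
        rw [tsum_congr this]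
        simp
      rw [hz σ hσ, hc0, sub_zero] at e1
      exact (mul_eq_zero.mp e1).resolve_left hσ
    exact ih c' (K * R) R hR hb' hz'



lemma ae_zero_of_moments (Γ : Set ℂ) (hΓ : IsCompact Γ)
    (P : Measure ℂ) [IsFiniteMeasure P] (hsupp : P Γᶜ = 0)
    (w : ℂ → ℂ) (hwm : AEStronglyMeasurable w P) (Mw : ℝ) (hMw : 0 ≤ Mw)
    (hwb : ∀ᵐ z ∂P, ‖w z‖ ≤ Mw)
    (hmom : ∀ n m : ℕ, ∫ z, z ^ n * (starRingEnd ℂ) z ^ m * w z ∂P = 0) :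
    ∀ᵐ z ∂P, w z = 0 := by
  classical
  haveI : CompactSpace ↑Γ := isCompact_iff_compactSpace.mp hΓ
  have hΓm : MeasurableSet Γ := hΓ.isClosed.measurableSet
  have haeΓ : ∀ᵐ z ∂P, z ∈ Γ := by
    rw [ae_iff]
    exact hsupp
  have hPr : P.restrict Γ = P := Measure.restrict_eq_self_of_ae_mem haeΓ
  -- the identity continuous map on Γ
  set x : C(↑Γ, ℂ) := ⟨Subtype.val, continuous_subtype_val⟩ with hx
  set S : Set C(↑Γ, ℂ) := {g | ∃ n m : ℕ, g = x ^ n * (star x) ^ m} with hS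
  set M₀ : Submodule ℂ C(↑Γ, ℂ) := Submodule.span ℂ S with hM₀
  have hone : (1 : C(↑Γ, ℂ)) ∈ M₀ := by
    apply Submodule.subset_span
    exact ⟨0, 0, by simp⟩
  have hSmul : ∀ g₁ ∈ S, ∀ g₂ ∈ S, g₁ * g₂ ∈ S := by
    rintro g₁ ⟨n₁, m₁, rfl⟩ g₂ ⟨n₂, m₂, rfl⟩
    exact ⟨n₁ + n₂, m₁ + m₂, by rw [pow_add, pow_add]; ring⟩
  have hmul : ∀ g₁ ∈ M₀, ∀ g₂ ∈ M₀, g₁ * g₂ ∈ M₀ := by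
    intro g₁ hg₁ g₂ hg₂
    induction hg₁ using Submodule.span_induction with
    | mem a ha =>
      induction hg₂ using Submodule.span_induction with
      | mem b hb => exact Submodule.subset_span (hSmul _ ha _ hb)
      | zero => simpa using Submodule.zero_mem M₀
      | add b c _ _ hb hc => rw [mul_add]; exact Submodule.add_mem _ hb hc
      | smul r b _ hb => rw [mul_smul_comm]; exact Submodule.smul_mem _ _ hb
    | zero => simpa using Submodule.zero_mem M₀
    | add a c _ _ ha hc => rw [add_mul]; exact Submodule.add_mem _ ha hc
    | smul r a _ ha => rw [smul_mul_assoc]; exact Submodule.smul_mem _ _ ha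
  have hstar : ∀ g ∈ M₀, star g ∈ M₀ := by
    intro g hg
    induction hg using Submodule.span_induction with
    | mem a ha =>
      obtain ⟨n, m, rfl⟩ := ha
      apply Submodule.subset_span
      exact ⟨m, n, by rw [star_mul, star_pow, star_pow, star_star]⟩
    | zero => simpa using Submodule.zero_mem M₀
    | add a c _ _ ha hc => rw [star_add]; exact Submodule.add_mem _ ha hc
    | smul r a _ ha =>
      rw [star_smul]
      exact Submodule.smul_mem _ _ ha
  set A : StarSubalgebra ℂ C(↑Γ, ℂ) :=
    { toSubalgebra := M₀.toSubalgebra hone (fun g₁ g₂ h₁ h₂ => hmul g₁ h₁ g₂ h₂)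
      star_mem' := fun hg => hstar _ hg } with hA
  have hsep : A.SeparatesPoints := by
    intro p q hpq
    refine ⟨_, ⟨x, ?_, rfl⟩, ?_⟩
    · show x ∈ A
      apply Submodule.subset_span
      exact ⟨1, 0, by simp⟩
    · show x p ≠ x q
      simpa [hx] using fun hc => hpq (Subtype.ext hc)
  have htop : A.topologicalClosure = ⊤ :=
    ContinuousMap.starSubalgebra_topologicalClosure_eq_top_of_separatesPoints A hsep
  -- the functional
  set ext : C(↑Γ, ℂ) → ℂ → ℂ := fun f z => if hz : z ∈ Γ then f ⟨z, hz⟩ else 0 with hext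
  have hext_eq : ∀ f : C(↑Γ, ℂ), ∀ z (hz : z ∈ Γ), ext f z = f ⟨z, hz⟩ := by
    intro f z hz; simp [hext, hz]
  have hext_meas : ∀ f : C(↑Γ, ℂ), AEStronglyMeasurable (ext f) P := by
    intro f
    have hco : ContinuousOn (ext f) Γ := by
      rw [continuousOn_iff_continuous_restrict]
      have : Γ.domRestrict (ext f) = f := by
        funext p
        simp [hext, p.2, Set.domRestrict_apply]
      rw [this]
      exact f.continuous
    rw [← hPr]
    exact hco.aestronglyMeasurable hΓm
  have hext_bound : ∀ f : C(↑Γ, ℂ), ∀ᵐ z ∂P, ‖ext f z‖ ≤ ‖f‖ := by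
    intro f
    filter_upwards [haeΓ] with z hz
    rw [hext_eq f z hz]
    exact f.norm_coe_le_norm _
  have hint : ∀ f : C(↑Γ, ℂ), Integrable (fun z => ext f z * w z) P := by
    intro f
    refine ⟨(hext_meas f).mul hwm, ?_⟩
    apply HasFiniteIntegral.of_bounded (C := ‖f‖ * Mw)
    filter_upwards [hext_bound f, hwb] with z h1 h2
    rw [norm_mul]
    exact mul_le_mul h1 h2 (norm_nonneg _) (norm_nonneg _)
  set Λ : C(↑Γ, ℂ) → ℂ := fun f => ∫ z, ext f z * w z ∂P with hΛ
  have hext_add : ∀ f g : C(↑Γ, ℂ), ext (f + g) = fun z => ext f z + ext g z := by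
    intro f g; funext z
    by_cases hz : z ∈ Γ <;> simp [hext, hz]
  have hext_smul : ∀ (c : ℂ) (f : C(↑Γ, ℂ)), ext (c • f) = fun z => c * ext f z := by
    intro c f; funext z
    by_cases hz : z ∈ Γ <;> simp [hext, hz]
  have hΛadd : ∀ f g : C(↑Γ, ℂ), Λ (f + g) = Λ f + Λ g := by
    intro f g
    rw [hΛ]
    simp only [hext_add f g, add_mul]
    exact integral_add (hint f) (hint g)
  have hΛsmul : ∀ (c : ℂ) (f : C(↑Γ, ℂ)), Λ (c • f) = c * Λ f := by
    intro c f
    rw [hΛ]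
    simp only [hext_smul c f, mul_assoc]
    exact integral_const_mul c _
  have hΛzero : Λ 0 = 0 := by
    have := hΛsmul 0 0
    simpa using this
  have hΛcont : Continuous Λ := by
    rw [Metric.continuous_iff]
    intro f ε hε
    refine ⟨ε / (Mw * (P univ).toReal + 1), by positivity, fun g hg => ?_⟩
    have hsub : Λ g - Λ f = ∫ z, ext (g - f) z * w z ∂P := by
      have h2 : Λ g = Λ (g - f) + Λ f := by
        rw [← hΛadd]
        congr 1
        ring
      rw [h2, hΛ]
      ring
    rw [dist_eq_norm, hsub]
    calc ‖∫ z, ext (g - f) z * w z ∂P‖ ≤ (‖g - f‖ * Mw) * (P univ).toReal := by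
          apply norm_integral_le_of_norm_le_const
          filter_upwards [hext_bound (g - f), hwb] with z h1 h2
          rw [norm_mul]
          exact mul_le_mul h1 h2 (norm_nonneg _) (norm_nonneg _)
      _ ≤ (dist g f) * (Mw * (P univ).toReal + 1) := by
          rw [dist_eq_norm]
          rcases le_or_gt ‖g - f‖ 0 with h | h
          · have : ‖g - f‖ = 0 := le_antisymm h (norm_nonneg _)
            rw [this]; simp
          · rw [mul_assoc]
            apply mul_le_mul_of_nonneg_left _ (le_of_lt h) |>.trans_eq rfl
            nlinarith [ENNReal.toReal_nonneg (a := P univ)]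
      _ < (ε / (Mw * (P univ).toReal + 1)) * (Mw * (P univ).toReal + 1) := by
          apply mul_lt_mul_of_pos_right hg (by positivity)
      _ = ε := by field_simp
  -- Λ vanishes on the generators
  have hΛS : ∀ g ∈ S, Λ g = 0 := by
    rintro g ⟨n, m, rfl⟩
    have hcongr : ∀ᵐ z ∂P, ext (x ^ n * star x ^ m) z * w z
        = z ^ n * (starRingEnd ℂ) z ^ m * w z := by
      filter_upwards [haeΓ] with z hz
      rw [hext_eq _ z hz]
      have h2 : (x ^ n * star x ^ m) (⟨z, hz⟩ : ↑Γ)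
          = z ^ n * (starRingEnd ℂ) z ^ m := by
        rw [ContinuousMap.mul_apply, ContinuousMap.pow_apply, ContinuousMap.pow_apply,
          ContinuousMap.star_apply, starRingEnd_apply]
        rfl
      rw [h2]
    have h3 : Λ (x ^ n * star x ^ m) = ∫ z, z ^ n * (starRingEnd ℂ) z ^ m * w z ∂P := by
      rw [hΛ]
      exact integral_congr_ae hcongr
    rw [h3]
    exact hmom n m
  have hΛM : ∀ g ∈ M₀, Λ g = 0 := by
    intro g hg
    induction hg using Submodule.span_induction with
    | mem a ha => exact hΛS _ ha
    | zero => exact hΛzero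
    | add a c _ _ ha hc => rw [hΛadd, ha, hc, add_zero]
    | smul r a _ ha => rw [hΛsmul, ha, mul_zero]
  have hall : ∀ f : C(↑Γ, ℂ), Λ f = 0 := by
    intro f
    have hmem : f ∈ closure (A : Set C(↑Γ, ℂ)) := by
      have h1 : f ∈ A.topologicalClosure := by rw [htop]; trivial
      exact h1
    have hclosed : IsClosed {f : C(↑Γ, ℂ) | Λ f = 0} := isClosed_eq hΛcont continuous_const
    have hsubset : (A : Set C(↑Γ, ℂ)) ⊆ {f : C(↑Γ, ℂ) | Λ f = 0} := fun g hg => hΛM g hg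
    exact closure_minimal hsubset hclosed hmem
  have hG : ∀ G : ℂ → ℂ, Continuous G → ∫ z, G z * w z ∂P = 0 := by
    intro G hGc
    have h1 := hall ⟨fun p => G ↑p, hGc.comp continuous_subtype_val⟩
    rw [hΛ] at h1
    rw [← h1]
    apply integral_congr_ae
    filter_upwards [haeΓ] with z hz
    rw [hext_eq _ z hz]
    rfl
  -- conclude by approximation in L¹
  have hwInt : Integrable w P := ⟨hwm, HasFiniteIntegral.of_bounded hwb⟩
  have hconjm : AEStronglyMeasurable (fun z => (starRingEnd ℂ) (w z)) P :=
    Complex.continuous_conj.comp_aestronglyMeasurable hwm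
  have hconjInt : Integrable (fun z => (starRingEnd ℂ) (w z)) P := by
    refine Integrable.mono' hwInt.norm hconjm ?_
    filter_upwards with z
    rw [RCLike.norm_conj]
  have hI1 : Integrable (fun z => w z * (starRingEnd ℂ) (w z)) P :=
    Integrable.bdd_mul hconjInt hwm hwb
  have hE : ∫ z, w z * (starRingEnd ℂ) (w z) ∂P = 0 := by
    have key : ∀ ε : ℝ, 0 < ε → ‖∫ z, w z * (starRingEnd ℂ) (w z) ∂P‖ ≤ Mw * ε := by
      intro ε hε
      obtain ⟨g, hgsupp, hgl1, hgc, hgInt⟩ := hwInt.exists_hasCompactSupport_integral_sub_le hε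
      have hconjgInt : Integrable (fun z => (starRingEnd ℂ) (g z)) P := by
        refine Integrable.mono' hgInt.norm
          (Complex.continuous_conj.comp_aestronglyMeasurable hgc.aestronglyMeasurable) ?_
        filter_upwards with z
        rw [RCLike.norm_conj]
      have hI2 : Integrable (fun z => w z * (starRingEnd ℂ) (g z)) P :=
        Integrable.bdd_mul hconjgInt hwm hwb
      have h1 : ∫ z, w z * (starRingEnd ℂ) (g z) ∂P = 0 := by
        rw [← hG (fun z => (starRingEnd ℂ) (g z)) (Complex.continuous_conj.comp hgc)]
        apply integral_congr_ae
        filter_upwards with z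
        ring
      calc ‖∫ z, w z * (starRingEnd ℂ) (w z) ∂P‖
          = ‖∫ z, (w z * (starRingEnd ℂ) (w z) - w z * (starRingEnd ℂ) (g z)) ∂P‖ := by
            rw [integral_sub hI1 hI2, h1, sub_zero]
        _ ≤ ∫ z, ‖w z * (starRingEnd ℂ) (w z) - w z * (starRingEnd ℂ) (g z)‖ ∂P :=
            norm_integral_le_integral_norm _
        _ ≤ ∫ z, Mw * ‖w z - g z‖ ∂P := by
            apply integral_mono_ae ((hI1.sub hI2).norm) (((hwInt.sub hgInt).norm).const_mul Mw)
            filter_upwards [hwb] with z hz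
            show ‖w z * (starRingEnd ℂ) (w z) - w z * (starRingEnd ℂ) (g z)‖
                ≤ Mw * ‖w z - g z‖
            have heq : w z * (starRingEnd ℂ) (w z) - w z * (starRingEnd ℂ) (g z)
                = w z * (starRingEnd ℂ) (w z - g z) := by
              rw [map_sub]; ring
            rw [heq, norm_mul, RCLike.norm_conj]
            exact mul_le_mul_of_nonneg_right hz (norm_nonneg _)
        _ = Mw * ∫ z, ‖w z - g z‖ ∂P := integral_const_mul Mw _
        _ ≤ Mw * ε := mul_le_mul_of_nonneg_left hgl1 hMw
    by_contra hne
    have hpos : 0 < ‖∫ z, w z * (starRingEnd ℂ) (w z) ∂P‖ := norm_pos_iff.mpr hne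
    have h2 := key (‖∫ z, w z * (starRingEnd ℂ) (w z) ∂P‖ / (2 * (Mw + 1))) (by positivity)
    have h3 : Mw * (‖∫ z, w z * (starRingEnd ℂ) (w z) ∂P‖ / (2 * (Mw + 1)))
        < ‖∫ z, w z * (starRingEnd ℂ) (w z) ∂P‖ := by
      rw [mul_div_assoc', div_lt_iff₀ (by positivity)]
      nlinarith
    linarith
  have hnormSq : ∫ z, Complex.normSq (w z) ∂P = 0 := by
    have h1 : ∫ z, Complex.normSq (w z) ∂P
        = RCLike.re (∫ z, w z * (starRingEnd ℂ) (w z) ∂P) := by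
      rw [← integral_re hI1]
      apply integral_congr_ae
      filter_upwards with z
      rw [Complex.mul_conj]
      rfl
    rw [h1, hE]
    rfl
  have hsqInt : Integrable (fun z => Complex.normSq (w z)) P := by
    refine ⟨Complex.continuous_normSq.comp_aestronglyMeasurable hwm, ?_⟩
    apply HasFiniteIntegral.of_bounded (C := Mw * Mw)
    filter_upwards [hwb] with z hz
    rw [Real.norm_eq_abs, _root_.abs_of_nonneg (Complex.normSq_nonneg _), Complex.normSq_eq_norm_sq,
      sq]
    exact mul_le_mul hz hz (norm_nonneg _) hMw
  have hae := (integral_eq_zero_iff_of_nonneg_ae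
    (Filter.Eventually.of_forall (fun z => Complex.normSq_nonneg (w z))) hsqInt).mp hnormSq
  filter_upwards [hae] with z hz
  exact Complex.normSq_eq_zero.mp hz

lemma hexp (x : ℂ) : Complex.exp x = ∑' n : ℕ, x ^ n / n ! := by
  rw [Complex.exp_eq_exp_ℂ, NormedSpace.exp_eq_tsum_div]

lemma hsumexp (x : ℂ) : Summable (fun n : ℕ => ‖x ^ n / (n ! : ℂ)‖) := by
  have : ∀ n : ℕ, ‖x ^ n / (n ! : ℂ)‖ = ‖x‖ ^ n / n ! := by
    intro n
    rw [norm_div, norm_pow]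
    congr 1
    simp
  rw [funext this]
  exact Real.summable_pow_div_factorial ‖x‖

lemma key (Γ : Set ℂ) (hΓ : IsCompact Γ)
    (P : Measure ℂ) [IsFiniteMeasure P] (h : ℂ → ℂ)
    (hmeas : Measurable h) (hnorm : ∀ z, ‖h z‖ = 1)
    (hsupp : P Γᶜ = 0)
    (F : ℂ → ℂ) (hF : ContinuousOn F Γ)
    (hcov : ∀ m n : ℕ,
      ∫ z, z ^ n * (starRingEnd ℂ) z ^ m * ((‖F z‖ ^ 2 : ℝ) : ℂ) * h z ∂P
        = (∫ z, z ^ n * F z * h z ∂P) *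
            ∫ z, (starRingEnd ℂ) z ^ m * (starRingEnd ℂ) (F z) * h z ∂P)
    (h0 : (∫ z, F z * h z ∂P = 0) ∨ (∫ z, (starRingEnd ℂ) (F z) * h z ∂P = 0)) :
    ∀ᵐ z ∂P, F z = 0 := by
  classical
  have hΓm : MeasurableSet Γ := hΓ.isClosed.measurableSet
  have haeΓ : ∀ᵐ z ∂P, z ∈ Γ := by
    rw [ae_iff]
    exact hsupp
  have hPr : P.restrict Γ = P := Measure.restrict_eq_self_of_ae_mem haeΓ
  have hFm : AEStronglyMeasurable F P := by
    rw [← hPr]; exact hF.aestronglyMeasurable hΓm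
  obtain ⟨MF0, hMF0⟩ := hΓ.exists_bound_of_continuousOn hF
  set MF : ℝ := max MF0 0 with hMFdef
  have hMFnn : 0 ≤ MF := le_max_right _ _
  have hMF : ∀ z ∈ Γ, ‖F z‖ ≤ MF := fun z hz => le_trans (hMF0 z hz) (le_max_left _ _)
  obtain ⟨R0, hR0⟩ := hΓ.exists_bound_of_continuousOn continuousOn_id
  set R : ℝ := max R0 0 with hRdef
  have hRnn : 0 ≤ R := le_max_right _ _
  have hR : ∀ z ∈ Γ, ‖z‖ ≤ R := fun z hz => le_trans (hR0 z hz) (le_max_left _ _)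
  set w : ℂ → ℂ := fun z => ((‖F z‖ ^ 2 : ℝ) : ℂ) * h z with hwdef
  have hwm : AEStronglyMeasurable w P := by
    have h1 : AEStronglyMeasurable (fun z => (‖F z‖ ^ 2 : ℝ)) P := by
      have := hFm.norm
      have h2 : AEStronglyMeasurable (fun z => ‖F z‖ * ‖F z‖) P := this.mul this
      refine h2.congr ?_
      filter_upwards with z
      rw [sq]
    exact (Complex.continuous_ofReal.comp_aestronglyMeasurable h1).mul
      hmeas.aestronglyMeasurable
  have hwb : ∀ᵐ z ∂P, ‖w z‖ ≤ MF ^ 2 := by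
    filter_upwards [haeΓ] with z hz
    rw [hwdef]
    simp only [norm_mul, hnorm z, mul_one, Complex.norm_real, Real.norm_eq_abs]
    rw [_root_.abs_of_nonneg (sq_nonneg ‖F z‖)]
    exact pow_le_pow_left₀ (norm_nonneg _) (hMF z hz) 2
  set a : ℕ → ℂ := fun n => ∫ z, z ^ n * F z * h z ∂P with hadef
  set b : ℕ → ℂ := fun m => ∫ z, (starRingEnd ℂ) z ^ m * (starRingEnd ℂ) (F z) * h z ∂P
    with hbdef
  set K : ℝ := MF * (P univ).toReal with hKdef
  have hKnn : 0 ≤ K := mul_nonneg hMFnn ENNReal.toReal_nonneg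
  have ha_bound : ∀ n, ‖a n‖ ≤ K * R ^ n := by
    intro n
    rw [hadef]
    calc ‖∫ z, z ^ n * F z * h z ∂P‖ ≤ (R ^ n * MF) * (P univ).toReal := by
          apply norm_integral_le_of_norm_le_const
          filter_upwards [haeΓ] with z hz
          rw [norm_mul, norm_mul, hnorm z, mul_one, norm_pow]
          exact mul_le_mul (pow_le_pow_left₀ (norm_nonneg _) (hR z hz) n) (hMF z hz)
            (norm_nonneg _) (by positivity)
      _ = K * R ^ n := by rw [hKdef]; ring
  have hb_bound : ∀ m, ‖b m‖ ≤ K * R ^ m := by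
    intro m
    rw [hbdef]
    calc ‖∫ z, (starRingEnd ℂ) z ^ m * (starRingEnd ℂ) (F z) * h z ∂P‖
        ≤ (R ^ m * MF) * (P univ).toReal := by
          apply norm_integral_le_of_norm_le_const
          filter_upwards [haeΓ] with z hz
          rw [norm_mul, norm_mul, hnorm z, mul_one, norm_pow, RCLike.norm_conj,
            RCLike.norm_conj]
          exact mul_le_mul (pow_le_pow_left₀ (norm_nonneg _) (hR z hz) m) (hMF z hz)
            (norm_nonneg _) (by positivity)
      _ = K * R ^ m := by rw [hKdef]; ring
  set ca : ℕ → ℂ := fun n => a n / n ! with hcadef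
  set cbr : ℕ → ℂ := fun m => b m / m ! with hcbrdef
  set cb : ℕ → ℂ := fun m => (starRingEnd ℂ) (b m) / m ! with hcbdef
  have hfacpos : ∀ n : ℕ, (0:ℝ) < n ! := fun n => by exact_mod_cast Nat.factorial_pos n
  have hca : ∀ n, ‖ca n‖ ≤ K * R ^ n / n ! := by
    intro n
    rw [hcadef, norm_div, Complex.norm_natCast]
    gcongr
    exact ha_bound n
  have hcbr : ∀ m, ‖cbr m‖ ≤ K * R ^ m / m ! := by
    intro m
    rw [hcbrdef, norm_div, Complex.norm_natCast]
    gcongr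
    exact hb_bound m
  have hcb : ∀ m, ‖cb m‖ ≤ K * R ^ m / m ! := by
    intro m
    rw [hcbdef, norm_div, Complex.norm_natCast, RCLike.norm_conj]
    gcongr
    exact hb_bound m
  -- The factorization of the exponential transform
  have hFACT : ∀ s t : ℂ,
      ∫ z, Complex.exp (s * z + t * (starRingEnd ℂ) z) * w z ∂P = T ca s * T cbr t := by
    intro s t
    set f : ℕ × ℕ → ℂ → ℂ := fun p z =>
      (s ^ p.1 * t ^ p.2 / ((p.1 ! : ℂ) * (p.2 ! : ℂ))) *
        (z ^ p.1 * (starRingEnd ℂ) z ^ p.2 * w z) with hfdef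
    have hpt : ∀ z : ℂ, Complex.exp (s * z + t * (starRingEnd ℂ) z) * w z
        = ∑' p : ℕ × ℕ, f p z := by
      intro z
      rw [Complex.exp_add, hexp (s * z), hexp (t * (starRingEnd ℂ) z),
        tsum_mul_tsum_of_summable_norm (hsumexp _) (hsumexp _), ← tsum_mul_right]
      apply tsum_congr
      intro p
      rw [hfdef]
      simp only [mul_pow]
      ring
    have hfm : ∀ p : ℕ × ℕ, AEStronglyMeasurable (f p) P := by
      intro p
      apply AEStronglyMeasurable.const_mul
      exact ((continuous_pow p.1).aestronglyMeasurable.mul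
        ((Complex.continuous_conj.pow p.2).aestronglyMeasurable)).mul hwm
    set u : ℕ → ℝ := fun n => (‖s‖ * R) ^ n / n ! with hudef
    set v : ℕ → ℝ := fun m => (‖t‖ * R) ^ m / m ! with hvdef
    have hu : Summable u := Real.summable_pow_div_factorial _
    have hv : Summable v := Real.summable_pow_div_factorial _
    have hunn : ∀ n, 0 ≤ u n := fun n => by rw [hudef]; positivity
    have hvnn : ∀ m, 0 ≤ v m := fun m => by rw [hvdef]; positivity
    have hfb : ∀ p : ℕ × ℕ, ∀ᵐ z ∂P, ‖f p z‖ ≤ MF ^ 2 * (u p.1 * v p.2) := by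
      intro p
      filter_upwards [haeΓ, hwb] with z hz hb
      rw [hfdef]
      have h1 : ‖s ^ p.1 * t ^ p.2 / ((p.1 ! : ℂ) * (p.2 ! : ℂ))‖
          = ‖s‖ ^ p.1 * ‖t‖ ^ p.2 / ((p.1 ! : ℝ) * (p.2 ! : ℝ)) := by
        rw [norm_div, norm_mul, norm_mul, norm_pow, norm_pow, Complex.norm_natCast,
          Complex.norm_natCast]
      have h2 : ‖z ^ p.1 * (starRingEnd ℂ) z ^ p.2 * w z‖ ≤ R ^ p.1 * R ^ p.2 * MF ^ 2 := by
        rw [norm_mul, norm_mul, norm_pow, norm_pow, RCLike.norm_conj]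
        apply mul_le_mul _ hb (norm_nonneg _) (by positivity)
        exact mul_le_mul (pow_le_pow_left₀ (norm_nonneg _) (hR z hz) _)
          (pow_le_pow_left₀ (norm_nonneg _) (hR z hz) _) (by positivity) (by positivity)
      calc ‖(s ^ p.1 * t ^ p.2 / ((p.1 ! : ℂ) * (p.2 ! : ℂ))) *
            (z ^ p.1 * (starRingEnd ℂ) z ^ p.2 * w z)‖
          = ‖s ^ p.1 * t ^ p.2 / ((p.1 ! : ℂ) * (p.2 ! : ℂ))‖ *
            ‖z ^ p.1 * (starRingEnd ℂ) z ^ p.2 * w z‖ := norm_mul _ _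
        _ ≤ (‖s‖ ^ p.1 * ‖t‖ ^ p.2 / ((p.1 ! : ℝ) * (p.2 ! : ℝ))) *
            (R ^ p.1 * R ^ p.2 * MF ^ 2) := by
            rw [h1]
            apply mul_le_mul_of_nonneg_left h2 (by positivity)
        _ = MF ^ 2 * (u p.1 * v p.2) := by
            rw [hudef, hvdef]
            simp only [mul_pow]
            field_simp
    have hlint : ∀ p : ℕ × ℕ, ∫⁻ z, ‖f p z‖₊ ∂P
        ≤ ENNReal.ofReal (MF ^ 2 * (u p.1 * v p.2)) * P univ := by
      intro p
      calc ∫⁻ z, ‖f p z‖₊ ∂P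
          ≤ ∫⁻ _, ENNReal.ofReal (MF ^ 2 * (u p.1 * v p.2)) ∂P := by
            apply lintegral_mono_ae
            filter_upwards [hfb p] with z hz
            rw [← ENNReal.ofReal_coe_nnreal, coe_nnnorm]
            exact ENNReal.ofReal_le_ofReal hz
        _ = ENNReal.ofReal (MF ^ 2 * (u p.1 * v p.2)) * P univ := lintegral_const _
    have hsum2 : Summable (fun p : ℕ × ℕ => MF ^ 2 * (u p.1 * v p.2)) :=
      (hu.mul_of_nonneg hv hunn hvnn).mul_left _
    have hsumlint : ∑' p : ℕ × ℕ, ∫⁻ z, ‖f p z‖₊ ∂P ≠ ⊤ := by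
      apply ne_top_of_le_ne_top _ (ENNReal.tsum_le_tsum hlint)
      rw [ENNReal.tsum_mul_right]
      apply ENNReal.mul_ne_top _ (measure_ne_top P univ)
      rw [← ENNReal.ofReal_tsum_of_nonneg (fun p => by positivity) hsum2]
      exact ENNReal.ofReal_ne_top
    calc ∫ z, Complex.exp (s * z + t * (starRingEnd ℂ) z) * w z ∂P
        = ∫ z, ∑' p : ℕ × ℕ, f p z ∂P :=
          integral_congr_ae (Filter.Eventually.of_forall hpt)
      _ = ∑' p : ℕ × ℕ, ∫ z, f p z ∂P := integral_tsum hfm hsumlint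
      _ = ∑' p : ℕ × ℕ, (s ^ p.1 * ca p.1) * (t ^ p.2 * cbr p.2) := by
          apply tsum_congr
          intro p
          rw [hfdef]
          simp only []
          rw [integral_const_mul]
          have hmm : ∫ z, z ^ p.1 * (starRingEnd ℂ) z ^ p.2 * w z ∂P = a p.1 * b p.2 := by
            rw [← hcov p.2 p.1]
            apply integral_congr_ae
            filter_upwards with z
            rw [hwdef]
            ring
          rw [hmm, hcadef, hcbrdef]
          have hn1 : ((p.1 ! : ℂ)) ≠ 0 := Nat.cast_ne_zero.mpr (Nat.factorial_ne_zero _)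
          have hn2 : ((p.2 ! : ℂ)) ≠ 0 := Nat.cast_ne_zero.mpr (Nat.factorial_ne_zero _)
          field_simp
      _ = T ca s * T cbr t :=
          (tsum_mul_tsum_of_summable_norm (summable_norm_T hca s)
            (summable_norm_T hcbr t)).symm
  -- conjugation identity
  have hconjT : ∀ σ : ℂ, T cb (-σ) = (starRingEnd ℂ) (T cbr (-(starRingEnd ℂ) σ)) := by
    intro σ
    rw [T, T, starRingEnd_apply, tsum_star]
    apply tsum_congr
    intro m
    rw [hcbdef, hcbrdef]
    simp only [star_mul', star_pow, star_neg, star_div₀, starRingEnd_apply, star_star]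
    congr 2
    · rw [← starRingEnd_apply, map_natCast]
  -- boundedness of H σ = φ(σ) ψc(-σ)
  have hHbound : ∀ σ : ℂ, ‖T ca σ * T cb (-σ)‖ ≤ MF ^ 2 * (P univ).toReal := by
    intro σ
    rw [hconjT σ, norm_mul, RCLike.norm_conj, ← norm_mul, ← hFACT σ (-(starRingEnd ℂ) σ)]
    apply norm_integral_le_of_norm_le_const
    filter_upwards [hwb] with z hz
    have hre : (σ * z + -(starRingEnd ℂ) σ * (starRingEnd ℂ) z).re = 0 := by
      have he : σ * z + -(starRingEnd ℂ) σ * (starRingEnd ℂ) z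
          = σ * z - (starRingEnd ℂ) (σ * z) := by
        rw [map_mul]
        ring
      rw [he, Complex.sub_conj]
      simp
    rw [norm_mul, Complex.norm_exp, hre, Real.exp_zero, one_mul]
    exact hz
  -- Liouville
  have hHdiff : Differentiable ℂ (fun σ => T ca σ * T cb (-σ)) :=
    (differentiable_T hRnn hca).mul ((differentiable_T hRnn hcb).comp differentiable_neg)
  have hHrange : Bornology.IsBounded (Set.range (fun σ => T ca σ * T cb (-σ))) := by
    rw [isBounded_iff_forall_norm_le]
    exact ⟨MF ^ 2 * (P univ).toReal, by rintro y ⟨σ, rfl⟩; exact hHbound σ⟩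
  have ha0 : a 0 = ∫ z, F z * h z ∂P := by
    rw [hadef]
    apply integral_congr_ae
    filter_upwards with z
    rw [pow_zero, one_mul]
  have hb0 : b 0 = ∫ z, (starRingEnd ℂ) (F z) * h z ∂P := by
    rw [hbdef]
    apply integral_congr_ae
    filter_upwards with z
    rw [pow_zero, one_mul]
  have hH0 : T ca 0 * T cb (-0) = 0 := by
    rw [neg_zero, T_zero hca, T_zero hcb, hcadef, hcbdef]
    simp only [Nat.factorial_zero, Nat.cast_one, div_one]
    rcases h0 with h0 | h0
    · rw [← ha0] at h0
      rw [h0, zero_mul]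
    · rw [← hb0] at h0
      rw [h0, map_zero, mul_zero]
  have hzero : ∀ σ : ℂ, T ca σ * T cb (-σ) = 0 := by
    intro σ
    have := hHdiff.apply_eq_apply_of_bounded hHrange σ 0
    rw [this, hH0]
  -- dichotomy via the identity theorem
  have hdich : (∀ n, a n = 0) ∨ (∀ m, b m = 0) := by
    by_cases hφ : ∀ σ : ℂ, T ca σ = 0
    · left
      intro n
      have hzn := ext_zero n ca K R hRnn hca (fun σ _ => hφ σ)
      rw [hcadef] at hzn
      have hn1 : ((n ! : ℂ)) ≠ 0 := Nat.cast_ne_zero.mpr (Nat.factorial_ne_zero _)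
      exact (div_eq_zero_iff.mp hzn).resolve_right hn1
    · right
      push_neg at hφ
      obtain ⟨σ₀, hσ₀⟩ := hφ
      have hψ0 : ∀ σ : ℂ, T cb σ = 0 := by
        have hanal : AnalyticOnNhd ℂ (T cb) univ :=
          fun z _ => (differentiable_T hRnn hcb).analyticAt z
        have hev : T cb =ᶠ[𝓝 (-σ₀)] 0 := by
          have hne : ∀ᶠ σ in 𝓝 σ₀, T ca σ ≠ 0 :=
            ((differentiable_T hRnn hca).continuous.continuousAt).eventually_ne hσ₀
          have hmap : Filter.Tendsto (fun τ : ℂ => -τ) (𝓝 (-σ₀)) (𝓝 σ₀) := by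
            have := (continuous_neg (G := ℂ)).tendsto (-σ₀)
            simpa using this
          filter_upwards [hmap.eventually hne] with τ hτ
          have hz2 := hzero (-τ)
          rw [neg_neg] at hz2
          exact (mul_eq_zero.mp hz2).resolve_left hτ
        have := hanal.eqOn_zero_of_preconnected_of_eventuallyEq_zero
          isPreconnected_univ (mem_univ (-σ₀)) hev
        intro σ
        exact this (mem_univ σ)
      intro m
      have hzm := ext_zero m cb K R hRnn hcb (fun σ _ => hψ0 σ)
      rw [hcbdef] at hzm
      have hn1 : ((m ! : ℂ)) ≠ 0 := Nat.cast_ne_zero.mpr (Nat.factorial_ne_zero _)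
      have := (div_eq_zero_iff.mp hzm).resolve_right hn1
      simpa using this
  -- all moments vanish
  have hmom : ∀ n m : ℕ, ∫ z, z ^ n * (starRingEnd ℂ) z ^ m * w z ∂P = 0 := by
    intro n m
    have h1 : ∫ z, z ^ n * (starRingEnd ℂ) z ^ m * w z ∂P = a n * b m := by
      rw [← hcov m n]
      apply integral_congr_ae
      filter_upwards with z
      rw [hwdef]
      ring
    rw [h1]
    rcases hdich with hd | hd
    · rw [hd n, zero_mul]
    · rw [hd m, mul_zero]
  have hw0 := ae_zero_of_moments Γ hΓ P hsupp w hwm (MF ^ 2) (by positivity) hwb hmom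
  filter_upwards [hw0] with z hz
  rw [hwdef] at hz
  simp only [] at hz
  rcases mul_eq_zero.mp hz with hz1 | hz1
  · have : ‖F z‖ ^ 2 = 0 := by exact_mod_cast hz1
    have h2 : ‖F z‖ = 0 := by
      nlinarith [norm_nonneg (F z)]
    exact norm_eq_zero.mp h2
  · exfalso
    have := hnorm z
    rw [hz1] at this
    simp at this


end Stmt12Aux

open MeasureTheory Complex

/-- Under the covariance equation for `μ = h • P` (a complex measure of mass 1
supported on a compact `Γ ⊆ ℂ`) with respect to a continuous `F`, the
following are equivalent: `F·μ ≠ 0`, `∫ F dμ ≠ 0`, `∫ conj F dμ ≠ 0`,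
and `∫ |F|² dμ ≠ 0`. -/
theorem stmt_12 (Γ : Set ℂ) (hΓ : IsCompact Γ)
    (P : Measure ℂ) [IsFiniteMeasure P] (h : ℂ → ℂ)
    (hmeas : Measurable h) (hnorm : ∀ z, ‖h z‖ = 1)
    (hsupp : P Γᶜ = 0)
    (hmass : ∫ z, h z ∂P = 1)
    (F : ℂ → ℂ) (hF : ContinuousOn F Γ)
    (hcov : ∀ m n : ℕ,
      ∫ z, z ^ n * (starRingEnd ℂ) z ^ m * ((‖F z‖ ^ 2 : ℝ) : ℂ) * h z ∂P
        = (∫ z, z ^ n * F z * h z ∂P) *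
            ∫ z, (starRingEnd ℂ) z ^ m * (starRingEnd ℂ) (F z) * h z ∂P) :
    ((∃ s : Set ℂ, MeasurableSet s ∧ ∫ z in s, F z * h z ∂P ≠ 0)
        ↔ ∫ z, F z * h z ∂P ≠ 0) ∧
      ((∫ z, F z * h z ∂P ≠ 0) ↔ ∫ z, (starRingEnd ℂ) (F z) * h z ∂P ≠ 0) ∧
      ((∫ z, (starRingEnd ℂ) (F z) * h z ∂P ≠ 0)
        ↔ ∫ z, ((‖F z‖ ^ 2 : ℝ) : ℂ) * h z ∂P ≠ 0) := by
  have hC : ∫ z, ((‖F z‖ ^ 2 : ℝ) : ℂ) * h z ∂P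
      = (∫ z, F z * h z ∂P) * ∫ z, (starRingEnd ℂ) (F z) * h z ∂P := by
    have h00 := hcov 0 0
    simpa using h00
  have himp : (∫ z, F z * h z ∂P = 0 ∨ ∫ z, (starRingEnd ℂ) (F z) * h z ∂P = 0) →
      (∫ z, F z * h z ∂P = 0 ∧ ∫ z, (starRingEnd ℂ) (F z) * h z ∂P = 0 ∧
        (∀ s : Set ℂ, ∫ z in s, F z * h z ∂P = 0)) := by
    intro h0
    have hae := Stmt12Aux.key Γ hΓ P h hmeas hnorm hsupp F hF hcov h0
    have hu : (fun z => F z * h z) =ᵐ[P] 0 := by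
      filter_upwards [hae] with z hz
      rw [hz, zero_mul]
      rfl
    have hv : (fun z => (starRingEnd ℂ) (F z) * h z) =ᵐ[P] 0 := by
      filter_upwards [hae] with z hz
      rw [hz, map_zero, zero_mul]
      rfl
    refine ⟨integral_eq_zero_of_ae hu, integral_eq_zero_of_ae hv, fun s => ?_⟩
    exact integral_eq_zero_of_ae (ae_restrict_of_ae hu)
  refine ⟨⟨?_, ?_⟩, ⟨?_, ?_⟩, ⟨?_, ?_⟩⟩
  · rintro ⟨s, hs, hint⟩
    intro hA0
    exact hint ((himp (Or.inl hA0)).2.2 s)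
  · intro hA
    exact ⟨Set.univ, MeasurableSet.univ, by rwa [Measure.restrict_univ]⟩
  · intro hA hB0
    exact hA (himp (Or.inr hB0)).1
  · intro hB hA0
    exact hB (himp (Or.inl hA0)).2.1
  · intro hB
    rw [hC]
    have hA : ∫ z, F z * h z ∂P ≠ 0 := fun hA0 => hB (himp (Or.inl hA0)).2.1
    exact mul_ne_zero hA hB
  · intro hCne hB0
    rw [hC, hB0, mul_zero] at hCne
    exact hCne rfl
end

section
/- Let Γ ⊂ ℂ be compact, μ a complex Borel measure on Γ with μ(Γ) = 1 and F : Γ → ℂ continuous with ∫ F dμ ≠ 0, satisfying the covariance equation ∫ zⁿ conj(z)ᵐ |F|² dμ = (∫ zⁿ F dμ)(∫ conj(z)ᵐ conj(F) dμ) for all m, n ∈ ℕ. Define γ := (∫ z·F(z) dμ(z)) / (∫ F dμ). Then γ also equals (∫ z·|F(z)|² dμ(z)) / (∫ |F|² dμ), and for all continuous f : ℂ → ℂ one has ∫ f(z) |F(z)|² dμ(z) = f(γ) · ∫ |F|² dμ; in particular γ ∈ Γ and |F|²·μ = (∫ |F|² dμ)·δ_γ. -/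
/-!
The covariance equation says that the moments of `ν = |F|² μ` factor, `∫ zⁿ z̄ᵐ dν = Aₙ Bₘ`,
so summing exponential series gives `∫ e^{sz} e^{u z̄} dν = a(s) b(u)` with `a(s) = ∫ e^{sz} F dμ`
and `b(u) = ∫ e^{u z̄} F̄ dμ`. On the line `u = -s̄` the left side is the Fourier transform of `ν`,
hence bounded, so the entire function `a(s) · conj b(-s̄)` is constant by Liouville's theorem.
Running this argument for `(z - γ) ν` and `(z - γ) F μ`, whose total mass `A₁ - γ A₀` vanishes,
shows that the Fourier transform of `(z - γ) ν` vanishes. Hence `(z - γ) ν = 0`, i.e. `ν` is a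
multiple of `δ_γ`, and `ν ≠ 0` because `∫ F dμ ≠ 0`.
-/

open MeasureTheory Complex
open scoped Classical ComplexConjugate FourierTransform RealInnerProductSpace

section ExpIntegral

variable {X : Type*} [MeasurableSpace X] {μ : Measure X} {φ g : X → ℂ} {R : ℝ}

theorem hasSum_integral_cexp_mul_s13 (hφ : AEStronglyMeasurable φ μ) (hφR : ∀ᵐ x ∂μ, ‖φ x‖ ≤ R)
    (hg : Integrable g μ) (s : ℂ) :
    HasSum (fun j : ℕ => s ^ j / j.factorial * ∫ x, φ x ^ j * g x ∂μ)
      (∫ x, cexp (s * φ x) * g x ∂μ) := by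
  simp_rw [← integral_const_mul]
  refine hasSum_integral_of_dominated_convergence (fun j x => (‖s‖ * R) ^ j / j.factorial * ‖g x‖)
    (fun j => ((hφ.pow j).mul hg.1).const_mul _) (fun j => ?_)
    (.of_forall fun x => (Real.summable_pow_div_factorial _).mul_right _) ?_
    (.of_forall fun x => ?_)
  · filter_upwards [hφR] with x hx
    rw [norm_mul, norm_mul, norm_div, norm_pow, norm_pow, norm_natCast, mul_pow, ← mul_assoc,
      mul_div_right_comm]
    gcongr
  · simp_rw [tsum_mul_right]
    exact hg.norm.const_mul _
  · have := (NormedSpace.expSeries_div_hasSum_exp (s * φ x)).mul_right (g x)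
    rw [← exp_eq_exp_ℂ] at this
    exact this.congr_fun fun j => by ring

theorem differentiable_integral_cexp_mul (hφ : AEStronglyMeasurable φ μ)
    (hφR : ∀ᵐ x ∂μ, ‖φ x‖ ≤ R) (hg : Integrable g μ) :
    Differentiable ℂ fun t => ∫ x, cexp (t * φ x) * g x ∂μ := by
  intro t
  have hexp_meas (t : ℂ) : AEStronglyMeasurable (fun x => cexp (t * φ x)) μ :=
    continuous_exp.comp_aestronglyMeasurable (hφ.const_mul t)
  have hexp : ∀ᵐ x ∂μ, ∀ y ∈ Metric.ball t 1, ‖cexp (y * φ x)‖ ≤ Real.exp ((‖t‖ + 1) * R) := by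
    filter_upwards [hφR] with x hx y hy
    have hy : ‖y‖ ≤ ‖t‖ + 1 := by
      linarith [norm_le_norm_add_norm_sub' y t, mem_ball_iff_norm.1 hy]
    refine (norm_exp_le_exp_norm _).trans (Real.exp_le_exp.2 ?_)
    rw [norm_mul]
    have hR : 0 ≤ R := (norm_nonneg _).trans hx
    gcongr
  have hbound : ∀ᵐ x ∂μ, ∀ y ∈ Metric.ball t 1,
      ‖φ x * (cexp (y * φ x) * g x)‖ ≤ R * (Real.exp ((‖t‖ + 1) * R) * ‖g x‖) := by
    filter_upwards [hφR, hexp] with x hx hx' y hy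
    have hR : 0 ≤ R := (norm_nonneg _).trans hx
    rw [norm_mul, norm_mul]
    gcongr
    exact hx' y hy
  refine (hasDerivAt_integral_of_dominated_loc_of_deriv_le (Metric.ball_mem_nhds t one_pos)
    (.of_forall fun t => (hexp_meas t).mul hg.1)
    (hg.bdd_mul (hexp_meas t) (hexp.mono fun x hx => hx t (Metric.mem_ball_self one_pos)))
    (hφ.mul ((hexp_meas t).mul hg.1)) hbound ((hg.norm.const_mul _).const_mul _)
    (.of_forall fun x y _ => ?_)).2.differentiableAt
  exact (((hasDerivAt_id y).mul_const (φ x)).cexp.mul_const (g x)).congr_deriv (by simp; ring)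

end ExpIntegral

theorem MeasureTheory.Integrable.mul_of_continuousOn_of_ae_mem {X : Type*} [TopologicalSpace X]
    [T2Space X] [MeasurableSpace X] [OpensMeasurableSpace X] {μ : Measure X} {K : Set X}
    {φ ρ : X → ℂ}
    (hρ : Integrable ρ μ) (hK : IsCompact K) (hμK : ∀ᵐ x ∂μ, x ∈ K) (hφ : ContinuousOn φ K) :
    Integrable (fun x => φ x * ρ x) μ := by
  obtain ⟨C, hC⟩ := hK.exists_bound_of_continuousOn hφ
  have hmeas := hφ.aestronglyMeasurable (μ := μ) hK.measurableSet
  rw [Measure.restrict_eq_self_of_ae_mem hμK] at hmeas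
  exact hρ.bdd_mul hmeas (hμK.mono hC)

theorem ae_eq_zero_of_forall_integral_fourierChar_smul_eq_zero
    {V E : Type*} [NormedAddCommGroup V] [InnerProductSpace ℝ V] [FiniteDimensional ℝ V]
    [MeasurableSpace V] [BorelSpace V] [NormedAddCommGroup E] [NormedSpace ℂ E] [CompleteSpace E]
    {μ : Measure V} [SFinite μ] {ψ : V → E} (hψ : Integrable ψ μ)
    (h : ∀ ξ : V, ∫ v, 𝐞 ⟪ξ, v⟫ • ψ v ∂μ = 0) : ψ =ᵐ[μ] 0 := by
  refine ae_eq_zero_of_integral_contDiff_smul_eq_zero hψ.locallyIntegrable fun g hg hgc => ?_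
  let φ := (hgc.comp_left ofReal_zero).toSchwartzMap (ofRealCLM.contDiff.comp hg)
  have hφ : Integrable (𝓕 (φ : V → ℂ)) := by
    rw [← SchwartzMap.fourier_coe]; exact (𝓕 φ).integrable
  have hinv (v : V) : (g v : ℂ) = ∫ ξ, 𝐞 ⟪ξ, v⟫ • 𝓕 (φ : V → ℂ) ξ := by
    rw [← Real.fourierInv_eq, φ.continuous.fourierInv_fourier_eq φ.integrable hφ]; rfl
  have hint : Integrable (Function.uncurry fun ξ v => 𝐞 ⟪ξ, v⟫ • 𝓕 (φ : V → ℂ) ξ • ψ v)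
      (volume.prod μ) := by
    refine Integrable.mono' (hφ.norm.mul_prod hψ.norm) ?_
      (.of_forall fun ⟨ξ, v⟩ => by simp [Circle.norm_smul, norm_smul])
    exact ((Real.continuous_fourierChar.comp continuous_inner).aestronglyMeasurable).smul
      (hφ.1.comp_fst.smul hψ.1.comp_snd)
  calc ∫ v, g v • ψ v ∂μ = ∫ v, (∫ ξ, 𝐞 ⟪ξ, v⟫ • 𝓕 (φ : V → ℂ) ξ • ψ v) ∂μ := by
        refine integral_congr_ae (.of_forall fun v => ?_)
        simp only [← smul_assoc, integral_smul_const, ← hinv, Complex.coe_smul]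
    _ = ∫ ξ, 𝓕 (φ : V → ℂ) ξ • ∫ v, 𝐞 ⟪ξ, v⟫ • ψ v ∂μ := by
        rw [← integral_integral_swap hint]
        refine integral_congr_ae (.of_forall fun ξ => ?_)
        simp only [smul_comm (𝐞 _), integral_smul]
    _ = 0 := by simp [h]

theorem fourierChar_inner_eq_cexp_mul_cexp (ξ z : ℂ) :
    (𝐞 ⟪ξ, z⟫ : ℂ)
      = cexp (Real.pi * I * conj ξ * z) * cexp (-conj (Real.pi * I * conj ξ) * conj z) := by
  rw [Real.fourierChar_apply, ← exp_add]
  congr 1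
  apply Complex.ext
  · simp [Complex.inner]
  · simp [Complex.inner]
    ring

def MomentsFactor (P : Measure ℂ) (ρ f g : ℂ → ℂ) : Prop :=
  ∀ n m : ℕ, ∫ z, z ^ n * conj z ^ m * ρ z ∂P = (∫ z, z ^ n * f z ∂P) * ∫ z, conj z ^ m * g z ∂P

namespace MomentsFactor

variable {P : Measure ℂ} {K : Set ℂ} {ρ f g : ℂ → ℂ}

theorem mul_sub_const (hfac : MomentsFactor P ρ f g) (hK : IsCompact K) (hPK : ∀ᵐ z ∂P, z ∈ K)
    (hρ : Integrable ρ P) (hf : Integrable f P) (c : ℂ) :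
    MomentsFactor P (fun z => (z - c) * ρ z) (fun z => (z - c) * f z) g := by
  intro n m
  have hρ' : ∫ z, z ^ n * conj z ^ m * ((z - c) * ρ z) ∂P
      = ∫ z, z ^ (n + 1) * conj z ^ m * ρ z ∂P - c * ∫ z, z ^ n * conj z ^ m * ρ z ∂P := by
    rw [← integral_const_mul, ← integral_sub (hρ.mul_of_continuousOn_of_ae_mem hK hPK
      (by fun_prop)) ((hρ.mul_of_continuousOn_of_ae_mem hK hPK (by fun_prop)).const_mul c)]
    exact integral_congr_ae (.of_forall fun z => by ring)
  have hf' : ∫ z, z ^ n * ((z - c) * f z) ∂P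
      = ∫ z, z ^ (n + 1) * f z ∂P - c * ∫ z, z ^ n * f z ∂P := by
    rw [← integral_const_mul, ← integral_sub (hf.mul_of_continuousOn_of_ae_mem hK hPK
      (by fun_prop)) ((hf.mul_of_continuousOn_of_ae_mem hK hPK (by fun_prop)).const_mul c)]
    exact integral_congr_ae (.of_forall fun z => by ring)
  rw [hρ', hf', hfac, hfac]
  ring

theorem integral_cexp_mul_cexp_conj_mul (hfac : MomentsFactor P ρ f g) (hK : IsCompact K)
    (hPK : ∀ᵐ z ∂P, z ∈ K) (hρ : Integrable ρ P) (hf : Integrable f P) (hg : Integrable g P)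
    (s u : ℂ) :
    ∫ z, cexp (s * z) * (cexp (u * conj z) * ρ z) ∂P
      = (∫ z, cexp (s * z) * f z ∂P) * ∫ z, cexp (u * conj z) * g z ∂P := by
  obtain ⟨R, hR⟩ := hK.isBounded.exists_norm_le
  replace hR : ∀ᵐ z ∂P, ‖z‖ ≤ R := hPK.mono hR
  have hconjR : ∀ᵐ z ∂P, ‖conj z‖ ≤ R := by simpa using hR
  have hG := hasSum_integral_cexp_mul_s13 continuous_conj.aestronglyMeasurable hconjR hg u
  have hmoment (j : ℕ) : ∫ z, z ^ j * (cexp (u * conj z) * ρ z) ∂P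
      = (∫ z, z ^ j * f z ∂P) * ∫ z, cexp (u * conj z) * g z ∂P := calc
    _ = ∫ z, cexp (u * conj z) * (z ^ j * ρ z) ∂P :=
      integral_congr_ae (.of_forall fun z => by ring)
    _ = _ := (hasSum_integral_cexp_mul_s13 continuous_conj.aestronglyMeasurable hconjR
      (hρ.mul_of_continuousOn_of_ae_mem hK hPK (by fun_prop)) u).unique
        ((hG.mul_left _).congr_fun fun k => by
          rw [← mul_assoc, mul_comm _ (_ / _), mul_assoc, ← hfac]
          simp only [mul_assoc, mul_left_comm (conj _ ^ k)])
  exact (hasSum_integral_cexp_mul_s13 (φ := fun z => z) measurable_id'.aestronglyMeasurable hR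
    (hρ.mul_of_continuousOn_of_ae_mem hK hPK (by fun_prop)) s).unique
    (((hasSum_integral_cexp_mul_s13 (φ := fun z => z) measurable_id'.aestronglyMeasurable hR hf
      s).mul_right _).congr_fun fun j => by rw [hmoment, mul_assoc])

theorem integral_cexp_mul_mul_conj_eq (hfac : MomentsFactor P ρ f g) (hK : IsCompact K)
    (hPK : ∀ᵐ z ∂P, z ∈ K) (hρ : Integrable ρ P) (hf : Integrable f P) (hg : Integrable g P)
    (s : ℂ) :
    (∫ z, cexp (s * z) * f z ∂P) * conj (∫ z, cexp (-conj s * conj z) * g z ∂P)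
      = (∫ z, f z ∂P) * conj (∫ z, g z ∂P) := by
  obtain ⟨R, hR⟩ := hK.isBounded.exists_norm_le
  replace hR : ∀ᵐ z ∂P, ‖z‖ ≤ R := hPK.mono hR
  have hconj (t : ℂ) : conj (∫ z, cexp (-conj t * conj z) * g z ∂P)
      = ∫ z, cexp (-t * z) * conj (g z) ∂P := by
    rw [← integral_conj]
    exact integral_congr_ae (.of_forall fun z => by simp [← exp_conj])
  -- `Φ t = a(t) · conj b(-t̄)`, whose modulus is that of the Fourier transform of `ρ P` at `t`
  let Φ t := (∫ z, cexp (t * z) * f z ∂P) * ∫ z, cexp (-t * z) * conj (g z) ∂P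
  have hdiff : Differentiable ℂ Φ :=
    (differentiable_integral_cexp_mul (φ := fun z => z) measurable_id'.aestronglyMeasurable hR
      hf).mul ((differentiable_integral_cexp_mul (φ := fun z => z)
        measurable_id'.aestronglyMeasurable hR
        ((conjCLE : ℂ →L[ℝ] ℂ).integrable_comp hg)).comp differentiable_neg)
  have hbdd : Bornology.IsBounded (Set.range Φ) := by
    refine isBounded_iff_forall_norm_le.2 ⟨∫ z, ‖ρ z‖ ∂P, Set.forall_mem_range.2 fun t => ?_⟩
    calc ‖Φ t‖ = ‖∫ z, cexp (t * z) * (cexp (-conj t * conj z) * ρ z) ∂P‖ := by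
          rw [hfac.integral_cexp_mul_cexp_conj_mul hK hPK hρ hf hg, norm_mul, norm_mul, ← hconj,
            RCLike.norm_conj]
      _ ≤ ∫ z, ‖ρ z‖ ∂P := by
          refine (norm_integral_le_integral_norm _).trans_eq
            (integral_congr_ae (.of_forall fun z => ?_))
          dsimp only
          rw [← mul_assoc, norm_mul, ← exp_add, norm_exp]
          simp
  rw [hconj, ← integral_conj]
  simpa [Φ] using hdiff.apply_eq_apply_of_bounded hbdd s 0

theorem ae_eq_zero [SFinite P] (hfac : MomentsFactor P ρ f g) (hK : IsCompact K)
    (hPK : ∀ᵐ z ∂P, z ∈ K) (hρ : Integrable ρ P) (hf : Integrable f P) (hg : Integrable g P)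
    (hf0 : ∫ z, f z ∂P = 0) :
    ρ =ᵐ[P] 0 := by
  refine ae_eq_zero_of_forall_integral_fourierChar_smul_eq_zero hρ fun ξ => ?_
  set s : ℂ := Real.pi * I * conj ξ
  have h := hfac.integral_cexp_mul_mul_conj_eq hK hPK hρ hf hg s
  rw [hf0, zero_mul, mul_eq_zero, map_eq_zero] at h
  calc ∫ z, 𝐞 ⟪ξ, z⟫ • ρ z ∂P = ∫ z, cexp (s * z) * (cexp (-conj s * conj z) * ρ z) ∂P :=
        integral_congr_ae (.of_forall fun z => by
          simp only [Circle.smul_def, fourierChar_inner_eq_cexp_mul_cexp, smul_eq_mul, mul_assoc,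
            s])
    _ = 0 := by
        rw [hfac.integral_cexp_mul_cexp_conj_mul hK hPK hρ hf hg]
        exact mul_eq_zero.2 h

end MomentsFactor

section PointMass

variable {X : Type*} [MeasurableSpace X] {μ : Measure X} {ρ : X → ℂ} {x₀ : X}

theorem integral_mul_eq_of_ae_eq_zero_off (hρ : ∀ᵐ x ∂μ, x ≠ x₀ → ρ x = 0) (f : X → ℂ) :
    ∫ x, f x * ρ x ∂μ = f x₀ * ∫ x, ρ x ∂μ := by
  rw [← integral_const_mul]
  refine integral_congr_ae ?_
  filter_upwards [hρ] with x hx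
  by_cases h : x = x₀
  · rw [h]
  · simp [hx h]

theorem setIntegral_eq_ite_of_ae_eq_zero_off (hρ : ∀ᵐ x ∂μ, x ≠ x₀ → ρ x = 0) {A : Set X}
    (hA : MeasurableSet A) :
    ∫ x in A, ρ x ∂μ = if x₀ ∈ A then ∫ x, ρ x ∂μ else 0 := by
  rw [← integral_indicator hA]
  calc ∫ x, A.indicator ρ x ∂μ = ∫ x, A.indicator 1 x * ρ x ∂μ := by
        congr 1 with x
        by_cases hx : x ∈ A <;> simp [hx]
    _ = _ := by
        rw [integral_mul_eq_of_ae_eq_zero_off hρ]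
        split_ifs with h <;> simp [h]

theorem ae_eq_zero_of_integral_eq_zero_of_ae_eq_zero_off (hρ : ∀ᵐ x ∂μ, x ≠ x₀ → ρ x = 0)
    (hρi : Integrable ρ μ) (h0 : ∫ x, ρ x ∂μ = 0) : ρ =ᵐ[μ] 0 :=
  hρi.ae_eq_zero_of_forall_setIntegral_eq_zero fun _ hA _ => by
    rw [setIntegral_eq_ite_of_ae_eq_zero_off hρ hA, h0, ite_self]

end PointMass

theorem stmt_13_general (Γ : Set ℂ) (hΓ : IsCompact Γ)
    (P : Measure ℂ) [IsFiniteMeasure P] (h : ℂ → ℂ)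
    (hmeas : Measurable h) (hnorm : ∀ z, ‖h z‖ = 1)
    (hsupp : P Γᶜ = 0)
    (F : ℂ → ℂ) (hF : ContinuousOn F Γ)
    (hFint : ∫ z, F z * h z ∂P ≠ 0)
    (hcov : ∀ m n : ℕ,
      ∫ z, z ^ n * (starRingEnd ℂ) z ^ m * ((‖F z‖ ^ 2 : ℝ) : ℂ) * h z ∂P
        = (∫ z, z ^ n * F z * h z ∂P) *
            ∫ z, (starRingEnd ℂ) z ^ m * (starRingEnd ℂ) (F z) * h z ∂P)
    (γ : ℂ) (hγ : γ = (∫ z, z * F z * h z ∂P) / (∫ z, F z * h z ∂P)) :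
    γ = (∫ z, z * ((‖F z‖ ^ 2 : ℝ) : ℂ) * h z ∂P) /
          (∫ z, ((‖F z‖ ^ 2 : ℝ) : ℂ) * h z ∂P) ∧
      (∀ f : ℂ → ℂ, Continuous f →
        ∫ z, f z * ((‖F z‖ ^ 2 : ℝ) : ℂ) * h z ∂P
          = f γ * ∫ z, ((‖F z‖ ^ 2 : ℝ) : ℂ) * h z ∂P) ∧
      γ ∈ Γ ∧
      (∀ A : Set ℂ, MeasurableSet A →
        ∫ z in A, ((‖F z‖ ^ 2 : ℝ) : ℂ) * h z ∂P
          = if γ ∈ A then ∫ z, ((‖F z‖ ^ 2 : ℝ) : ℂ) * h z ∂P else 0) := by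
  set ρ : ℂ → ℂ := fun z => ((‖F z‖ ^ 2 : ℝ) : ℂ) * h z
  have hPΓ : ∀ᵐ z ∂P, z ∈ Γ := by simpa using measure_eq_zero_iff_ae_notMem.1 hsupp
  have hh : Integrable h P := .of_bound hmeas.aestronglyMeasurable 1 (.of_forall (hnorm · |>.le))
  have hf := hh.mul_of_continuousOn_of_ae_mem hΓ hPΓ hF
  have hg := hh.mul_of_continuousOn_of_ae_mem hΓ hPΓ (continuous_conj.comp_continuousOn hF)
  have hρ : Integrable ρ P := hh.mul_of_continuousOn_of_ae_mem hΓ hPΓ (by fun_prop)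
  have hfac : MomentsFactor P ρ (fun z => F z * h z) (fun z => conj (F z) * h z) :=
    fun n m => by simpa only [mul_assoc] using hcov m n
  have hf0 : ∫ z, (z - γ) * (F z * h z) ∂P = 0 := by
    rw [integral_congr_ae (.of_forall fun z => sub_mul z γ (F z * h z)),
      integral_sub (hf.mul_of_continuousOn_of_ae_mem (φ := fun z => z) hΓ hPΓ (by fun_prop))
        (hf.const_mul γ), integral_const_mul, hγ, div_mul_cancel₀ _ hFint]
    simp only [mul_assoc, sub_self]
  have hconc : ∀ᵐ z ∂P, z ≠ γ → ρ z = 0 := by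
    filter_upwards [(hfac.mul_sub_const hΓ hPΓ hρ hf γ).ae_eq_zero hΓ hPΓ
      (hρ.mul_of_continuousOn_of_ae_mem hΓ hPΓ (by fun_prop))
      (hf.mul_of_continuousOn_of_ae_mem hΓ hPΓ (by fun_prop)) hg hf0] with z hz hne
    exact (mul_eq_zero.1 hz).resolve_left (sub_ne_zero.2 hne)
  have hρ0 : ∫ z, ρ z ∂P ≠ 0 := fun h0 => hFint <| integral_eq_zero_of_ae <| by
    filter_upwards [ae_eq_zero_of_integral_eq_zero_of_ae_eq_zero_off hconc hρ h0] with z hz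
    simpa [ρ, hnorm, norm_ne_zero_iff.1 ((hnorm z).trans_ne one_ne_zero)] using hz
  refine ⟨?_, fun f _ => by simpa only [mul_assoc] using integral_mul_eq_of_ae_eq_zero_off hconc f,
    ?_, fun A hA => setIntegral_eq_ite_of_ae_eq_zero_off hconc hA⟩
  · rw [eq_div_iff hρ0]
    simpa only [mul_assoc] using (integral_mul_eq_of_ae_eq_zero_off hconc (fun z => z)).symm
  · by_contra hγΓ
    apply hρ0
    rw [← setIntegral_eq_integral_of_ae_compl_eq_zero (hPΓ.mono fun z hz hz' => absurd hz hz'),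
      setIntegral_eq_ite_of_ae_eq_zero_off hconc hΓ.measurableSet, if_neg hγΓ]

/-- Under the covariance equation with `∫ F dμ ≠ 0`, the point
`γ = (∫ z F dμ)/(∫ F dμ)` also equals `(∫ z |F|² dμ)/(∫ |F|² dμ)`, belongs to
`Γ`, and the measure `|F|²·μ` equals `(∫ |F|² dμ)·δ_γ`; in particular
`∫ f |F|² dμ = f(γ)·∫ |F|² dμ` for every continuous `f`. -/
theorem stmt_13 (Γ : Set ℂ) (hΓ : IsCompact Γ)
    (P : Measure ℂ) [IsFiniteMeasure P] (h : ℂ → ℂ)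
    (hmeas : Measurable h) (hnorm : ∀ z, ‖h z‖ = 1)
    (hsupp : P Γᶜ = 0)
    (hmass : ∫ z, h z ∂P = 1)
    (F : ℂ → ℂ) (hF : ContinuousOn F Γ)
    (hFint : ∫ z, F z * h z ∂P ≠ 0)
    (hcov : ∀ m n : ℕ,
      ∫ z, z ^ n * (starRingEnd ℂ) z ^ m * ((‖F z‖ ^ 2 : ℝ) : ℂ) * h z ∂P
        = (∫ z, z ^ n * F z * h z ∂P) *
            ∫ z, (starRingEnd ℂ) z ^ m * (starRingEnd ℂ) (F z) * h z ∂P)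
    (γ : ℂ) (hγ : γ = (∫ z, z * F z * h z ∂P) / (∫ z, F z * h z ∂P)) :
    γ = (∫ z, z * ((‖F z‖ ^ 2 : ℝ) : ℂ) * h z ∂P) /
          (∫ z, ((‖F z‖ ^ 2 : ℝ) : ℂ) * h z ∂P) ∧
      (∀ f : ℂ → ℂ, Continuous f →
        ∫ z, f z * ((‖F z‖ ^ 2 : ℝ) : ℂ) * h z ∂P
          = f γ * ∫ z, ((‖F z‖ ^ 2 : ℝ) : ℂ) * h z ∂P) ∧
      γ ∈ Γ ∧
      (∀ A : Set ℂ, MeasurableSet A →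
        ∫ z in A, ((‖F z‖ ^ 2 : ℝ) : ℂ) * h z ∂P
          = if γ ∈ A then ∫ z, ((‖F z‖ ^ 2 : ℝ) : ℂ) * h z ∂P else 0) :=
  stmt_13_general Γ hΓ P h hmeas hnorm hsupp F hF hFint hcov γ hγ
end
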